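/- arXiv:math/0008150 — 5 statements merged into one kernel-verified Lean document; each statement's English description precedes it below -/
import Mathlib

section
/- Let T > 0, let d, m be positive natural numbers, and let H : ℝ^d × ℝ^m → ℝ be a function such that: (i) for every x ∈ ℝ^d, the function y ↦ exp(-H(x,y)/T) is integrable over ℝ^m and its integral is positive; (ii) H is differentiable in x, and for each coordinate i and each point x₀ there is a neighborhood U of x₀ and an integrable function g : ℝ^m → ℝ dominating |∂_{x_i} exp(-H(x,y)/T)| ≤ g(y) for all x ∈ U. Then for each resolved coordinate i and each x, the renormalized Hamiltonian Ĥ(x) = -T · log(∫_{ℝ^m} exp(-H(x,y)/T) dy) is differentiable in x_i and ∂Ĥ/∂x_i (x) = (∫_{ℝ^m} (∂H/∂x_i)(x,y) · exp(-H(x,y)/T) dy) / (∫_{ℝ^m} exp(-H(x,y)/T) dy); that is, the gradient of the renormalized Hamiltonian with respect to the resolved variables equals the conditional expectation, under the canonical measure conditioned on the resolved variables, of the gradient of H. (This is the identity underlying Hald's theorem that first-order optimal prediction of a Hamiltonian system is again a Hamiltonian system, with Hamiltonian equal to -T times the logarithm of exp(-H/T) integrated over the unresolved variables.) -/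
open MeasureTheory

/-- Hald's identity underlying first-order optimal prediction: under integrability,
positivity, differentiability and local domination hypotheses, the renormalized
Hamiltonian `Ĥ(x) = -T log ∫ exp(-H(x,y)/T) dy` is differentiable in each resolved
coordinate `x_i`, with partial derivative equal to the conditional expectation of
`∂H/∂x_i` with respect to the canonical measure conditioned on `x`. -/
theorem renormalized_hamiltonian_gradient
    (T : ℝ) (hT : 0 < T) (d m : ℕ) (hd : 0 < d) (hm : 0 < m)
    (H : (Fin d → ℝ) → (Fin m → ℝ) → ℝ)
    (hInt : ∀ x : Fin d → ℝ, Integrable (fun y : Fin m → ℝ => Real.exp (-H x y / T)))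
    (hpos : ∀ x : Fin d → ℝ, 0 < ∫ y : Fin m → ℝ, Real.exp (-H x y / T))
    (hdiff : ∀ y : Fin m → ℝ, Differentiable ℝ (fun x : Fin d → ℝ => H x y))
    (hdom : ∀ (i : Fin d) (x₀ : Fin d → ℝ), ∃ U ∈ nhds x₀, ∃ g : (Fin m → ℝ) → ℝ,
      Integrable g ∧ ∀ x ∈ U, ∀ y : Fin m → ℝ,
        |fderiv ℝ (fun x' : Fin d → ℝ => Real.exp (-H x' y / T)) x (Pi.single i 1)| ≤ g y) :
    ∀ (i : Fin d) (x : Fin d → ℝ),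
      HasDerivAt
        (fun s : ℝ =>
          -T * Real.log (∫ y : Fin m → ℝ, Real.exp (-H (Function.update x i s) y / T)))
        ((∫ y : Fin m → ℝ,
            (fderiv ℝ (fun x' : Fin d → ℝ => H x' y) x (Pi.single i 1)) *
              Real.exp (-H x y / T)) /
          (∫ y : Fin m → ℝ, Real.exp (-H x y / T)))
        (x i) := by
  intro i x
  set u : ℝ → (Fin d → ℝ) := fun s => Function.update x i s with hu_def
  set F : ℝ → (Fin m → ℝ) → ℝ := fun s y => Real.exp (-H (u s) y / T) with hF_def
  set F' : ℝ → (Fin m → ℝ) → ℝ :=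
    fun s y => fderiv ℝ (fun x' : Fin d → ℝ => Real.exp (-H x' y / T)) (u s) (Pi.single i 1)
    with hF'_def
  -- the path s ↦ update x i s is affine with derivative Pi.single i 1
  have hu : ∀ s : ℝ, HasDerivAt u (Pi.single i 1) s := by
    intro s
    have heq : u = fun t : ℝ =>
        Function.update x i 0 + t • (Pi.single i 1 : Fin d → ℝ) := by
      funext t
      funext j
      by_cases h : j = i <;>
        simp [hu_def, Function.update_apply, Pi.single_apply, h]
    rw [heq]
    simpa using ((hasDerivAt_id s).smul_const (Pi.single i 1 : Fin d → ℝ)).const_add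
      (Function.update x i 0)
  -- differentiability of the exponential integrand in x'
  have hφdiff : ∀ y : Fin m → ℝ,
      Differentiable ℝ (fun x' : Fin d → ℝ => Real.exp (-H x' y / T)) := by
    intro y
    have h1 : Differentiable ℝ (fun x' : Fin d → ℝ => Real.exp (-H x' y * T⁻¹)) :=
      Differentiable.exp (Differentiable.mul_const (Differentiable.neg (hdiff y)) T⁻¹)
    simpa only [div_eq_mul_inv] using h1
  -- derivative of F in s
  have hFderiv : ∀ (s : ℝ) (y : Fin m → ℝ), HasDerivAt (fun t => F t y) (F' s y) s := by
    intro s y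
    exact ((hφdiff y (u s)).hasFDerivAt).comp_hasDerivAt s (hu s)
  -- measurability of F' (x i) as an a.e. limit of difference quotients
  have hmF : ∀ s : ℝ, AEStronglyMeasurable (F s) (volume : Measure (Fin m → ℝ)) :=
    fun s => (hInt (u s)).aestronglyMeasurable
  have hmeasF' : AEStronglyMeasurable (F' (x i)) (volume : Measure (Fin m → ℝ)) := by
    have htend : ∀ y : Fin m → ℝ,
        Filter.Tendsto
          (fun n : ℕ => (F (x i + ((n : ℝ) + 1)⁻¹) y - F (x i) y) * ((n : ℝ) + 1))
          Filter.atTop (nhds (F' (x i) y)) := by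
      intro y
      have h := hFderiv (x i) y
      rw [hasDerivAt_iff_tendsto_slope] at h
      have hseq : Filter.Tendsto (fun n : ℕ => x i + ((n : ℝ) + 1)⁻¹)
          Filter.atTop (nhdsWithin (x i) {x i}ᶜ) := by
        apply tendsto_nhdsWithin_of_tendsto_nhds_of_eventually_within
        · have h0 : Filter.Tendsto (fun n : ℕ => ((n : ℝ) + 1)⁻¹) Filter.atTop (nhds 0) := by
            simpa [one_div] using tendsto_one_div_add_atTop_nhds_zero_nat (𝕜 := ℝ)
          have := Filter.Tendsto.const_add (x i) h0
          simpa using this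
        · filter_upwards with n
          simp only [Set.mem_compl_iff, Set.mem_singleton_iff]
          have : (0 : ℝ) < ((n : ℝ) + 1)⁻¹ := by positivity
          intro hcon
          nlinarith [hcon]
      apply (h.comp hseq).congr
      intro n
      have hc : ((n : ℝ) + 1) ≠ 0 := by positivity
      simp only [Function.comp_apply, slope_def_field, add_sub_cancel_left]
      rw [div_eq_mul_inv, inv_inv]
    exact aestronglyMeasurable_of_tendsto_ae
      (f := fun (n : ℕ) (y : Fin m → ℝ) =>
        (F (x i + ((n : ℝ) + 1)⁻¹) y - F (x i) y) * ((n : ℝ) + 1))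
      Filter.atTop
      (fun n => ((hmF (x i + ((n : ℝ) + 1)⁻¹)).sub (hmF (x i))).mul_const _)
      (Filter.Eventually.of_forall htend)
  -- domination on a ball around x i
  obtain ⟨U, hU, g, hg_int, hg⟩ := hdom i x
  have hux : u (x i) = x := Function.update_eq_self i x
  have hpre : u ⁻¹' U ∈ nhds (x i) := by
    apply (hu (x i)).continuousAt.preimage_mem_nhds
    rw [hux]
    exact hU
  obtain ⟨ε, hε, hball⟩ := Metric.mem_nhds_iff.mp hpre
  -- differentiation under the integral sign
  have hmain := hasDerivAt_integral_of_dominated_loc_of_deriv_le (μ := volume)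
    (F := F) (F' := F') (bound := g) (x₀ := x i) (Metric.ball_mem_nhds (x i) hε)
    (Filter.Eventually.of_forall fun s => hmF s)
    (hInt (u (x i)))
    hmeasF'
    (Filter.Eventually.of_forall fun y s hs => by
      simpa [Real.norm_eq_abs] using hg (u s) (hball hs) y)
    hg_int
    (Filter.Eventually.of_forall fun y s hs => hFderiv s y)
  obtain ⟨-, hI⟩ := hmain
  -- compute the value of F' (x i)
  have hkey : ∀ y : Fin m → ℝ,
      fderiv ℝ (fun x' : Fin d → ℝ => Real.exp (-H x' y / T)) x (Pi.single i 1)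
        = -T⁻¹ * ((fderiv ℝ (fun x' : Fin d → ℝ => H x' y) x (Pi.single i 1)) *
            Real.exp (-H x y / T)) := by
    intro y
    have hH : HasFDerivAt (fun x' : Fin d → ℝ => H x' y)
        (fderiv ℝ (fun x' : Fin d → ℝ => H x' y) x) x := (hdiff y x).hasFDerivAt
    have h2 : HasFDerivAt (fun x' : Fin d → ℝ => Real.exp (-H x' y / T))
        (Real.exp (-H x y / T) •
          (T⁻¹ • -(fderiv ℝ (fun x' : Fin d → ℝ => H x' y) x))) x := by
      simp only [div_eq_mul_inv]
      exact (hH.neg.mul_const T⁻¹).exp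
    rw [h2.fderiv]
    simp only [ContinuousLinearMap.smul_apply, ContinuousLinearMap.neg_apply, smul_eq_mul]
    ring
  have hJ : (∫ y : Fin m → ℝ, F' (x i) y)
      = -T⁻¹ * ∫ y : Fin m → ℝ,
          (fderiv ℝ (fun x' : Fin d → ℝ => H x' y) x (Pi.single i 1)) *
            Real.exp (-H x y / T) := by
    rw [← integral_const_mul]
    congr 1
    funext y
    show fderiv ℝ (fun x' : Fin d → ℝ => Real.exp (-H x' y / T)) (u (x i)) (Pi.single i 1) = _
    rw [hux, hkey y]
  have hI0 : (∫ y : Fin m → ℝ, F (x i) y) = ∫ y : Fin m → ℝ, Real.exp (-H x y / T) := by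
    show (∫ y : Fin m → ℝ, Real.exp (-H (u (x i)) y / T)) = _
    rw [hux]
  rw [hJ] at hI
  have hIne : (∫ y : Fin m → ℝ, F (x i) y) ≠ 0 := by
    rw [hI0]; exact (hpos x).ne'
  have hlog := (hI.log hIne).const_mul (-T)
  rw [hI0] at hlog
  have hval : -T * (-T⁻¹ *
        (∫ y : Fin m → ℝ,
          (fderiv ℝ (fun x' : Fin d → ℝ => H x' y) x (Pi.single i 1)) *
            Real.exp (-H x y / T)) /
        ∫ y : Fin m → ℝ, Real.exp (-H x y / T))
      = (∫ y : Fin m → ℝ,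
          (fderiv ℝ (fun x' : Fin d → ℝ => H x' y) x (Pi.single i 1)) *
            Real.exp (-H x y / T)) /
        (∫ y : Fin m → ℝ, Real.exp (-H x y / T)) := by
    field_simp
  rw [hval] at hlog
  exact hlog
end

section
/- For all q₁, p₁ ∈ ℝ, -log(∫_{ℝ²} exp(-H(q₁, x, p₁, y)) dx dy) = (1/2)(q₁² + p₁²) + (1/2)·log(1 + p₁²) - log(2π), where H(q₁,q₂,p₁,p₂) = (1/2)(q₁² + q₂² + p₁² + p₂² + p₁²p₂²) and the integration is over (q₂,p₂) = (x,y) ∈ ℝ². Thus the renormalized Hamiltonian of the Hald system at temperature T = 1 is Ĥ(q₁,p₁) = (1/2)(q₁² + p₁²) + (1/2)·log(1 + p₁²), up to an additive constant, and its Hamiltonian equations q₁' = ∂Ĥ/∂p₁ = p₁ + p₁/(1+p₁²), p₁' = -∂Ĥ/∂q₁ = -q₁ are exactly the first-order optimal prediction equations of the Hald system. -/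
open MeasureTheory Real

/-- The renormalized Hamiltonian of the Hald system at temperature `T = 1`:
`-log ∫∫ exp(-H(q₁,x,p₁,y)) dx dy = (1/2)(q₁² + p₁²) + (1/2)log(1 + p₁²) - log(2π)`,
where `H(q₁,q₂,p₁,p₂) = (1/2)(q₁² + q₂² + p₁² + p₂² + p₁²p₂²)`; moreover the Hamiltonian
equations of `Ĥ(q₁,p₁) = (1/2)(q₁² + p₁²) + (1/2)log(1 + p₁²)` are exactly the
first-order optimal prediction equations: `∂Ĥ/∂p₁ = p₁ + p₁/(1+p₁²)` and
`∂Ĥ/∂q₁ = q₁`. -/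
theorem hald_renormalized_hamiltonian (q₁ p₁ : ℝ) :
    -Real.log (∫ v : ℝ × ℝ,
        Real.exp (-((1 / 2) * (q₁ ^ 2 + v.1 ^ 2 + p₁ ^ 2 + v.2 ^ 2 + p₁ ^ 2 * v.2 ^ 2)))) =
      (1 / 2) * (q₁ ^ 2 + p₁ ^ 2) + (1 / 2) * Real.log (1 + p₁ ^ 2) - Real.log (2 * π) ∧
    HasDerivAt
      (fun y : ℝ => (1 / 2) * (q₁ ^ 2 + y ^ 2) + (1 / 2) * Real.log (1 + y ^ 2))
      (p₁ + p₁ / (1 + p₁ ^ 2)) p₁ ∧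
    HasDerivAt
      (fun x : ℝ => (1 / 2) * (x ^ 2 + p₁ ^ 2) + (1 / 2) * Real.log (1 + p₁ ^ 2))
      q₁ q₁ := by
  have hp : (0:ℝ) < 1 + p₁ ^ 2 := by positivity
  refine ⟨?_, ?_, ?_⟩
  · have h : ∀ v : ℝ × ℝ,
        Real.exp (-((1 / 2) * (q₁ ^ 2 + v.1 ^ 2 + p₁ ^ 2 + v.2 ^ 2 + p₁ ^ 2 * v.2 ^ 2)))
        = Real.exp (-((1 / 2) * (q₁ ^ 2 + p₁ ^ 2))) *
          (Real.exp (-((1 / 2 : ℝ) * v.1 ^ 2)) *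
           Real.exp (-(((1 + p₁ ^ 2) / 2) * v.2 ^ 2))) := by
      intro v
      rw [← Real.exp_add, ← Real.exp_add]
      ring_nf
    have hint : (∫ v : ℝ × ℝ,
        Real.exp (-((1 / 2) * (q₁ ^ 2 + v.1 ^ 2 + p₁ ^ 2 + v.2 ^ 2 + p₁ ^ 2 * v.2 ^ 2))))
        = Real.exp (-((1 / 2) * (q₁ ^ 2 + p₁ ^ 2))) *
          (Real.sqrt (π / (1 / 2)) * Real.sqrt (π / ((1 + p₁ ^ 2) / 2))) := by
      simp only [h]
      rw [MeasureTheory.integral_const_mul, MeasureTheory.Measure.volume_eq_prod,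
        MeasureTheory.integral_prod_mul (fun x : ℝ => Real.exp (-(1 / 2 * x ^ 2)))
          (fun y : ℝ => Real.exp (-((1 + p₁ ^ 2) / 2 * y ^ 2)))]
      simp only [← neg_mul]
      rw [integral_gaussian, integral_gaussian]
    rw [hint, Real.log_mul (Real.exp_ne_zero _) (by positivity), Real.log_exp,
      Real.log_mul (by positivity) (by positivity),
      Real.log_sqrt (by positivity), Real.log_sqrt (by positivity),
      Real.log_div (ne_of_gt Real.pi_pos) (by norm_num),
      Real.log_div (ne_of_gt Real.pi_pos) (by positivity),
      Real.log_div (ne_of_gt hp) two_ne_zero,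
      Real.log_mul two_ne_zero (ne_of_gt Real.pi_pos),
      show Real.log (1 / 2) = -Real.log 2 by rw [one_div, Real.log_inv]]
    ring
  · have h1 : HasDerivAt (fun y : ℝ => (1 / 2) * (q₁ ^ 2 + y ^ 2)) p₁ p₁ := by
      have := ((hasDerivAt_pow 2 p₁).const_add (q₁ ^ 2)).const_mul (1 / 2 : ℝ)
      simpa using this.congr_deriv (by ring)
    have h2 : HasDerivAt (fun y : ℝ => (1 / 2) * Real.log (1 + y ^ 2))
        (p₁ / (1 + p₁ ^ 2)) p₁ := by
      have hin : HasDerivAt (fun y : ℝ => 1 + y ^ 2) (2 * p₁) p₁ := by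
        simpa using (hasDerivAt_pow 2 p₁).const_add (1 : ℝ)
      have := (hin.log (ne_of_gt hp)).const_mul (1 / 2 : ℝ)
      simpa using this.congr_deriv (by ring)
    exact h1.add h2
  · have h1 : HasDerivAt (fun x : ℝ => (1 / 2) * (x ^ 2 + p₁ ^ 2)) q₁ q₁ := by
      have := ((hasDerivAt_pow 2 q₁).add_const (p₁ ^ 2)).const_mul (1 / 2 : ℝ)
      simpa using this.congr_deriv (by ring)
    simpa using h1.add_const ((1 / 2) * Real.log (1 + p₁ ^ 2))
end

section
/- Let (q₁, p₁) : ℝ → ℝ² be a differentiable curve satisfying the first-order optimal prediction equations of the Hald system, q₁'(t) = p₁(t) + p₁(t)/(1 + p₁(t)²), p₁'(t) = -q₁(t). Then Ĥ(q₁(t), p₁(t)) = (1/2)(q₁(t)² + p₁(t)²) + (1/2)·log(1 + p₁(t)²) is constant in t. In particular, if (q₁(0), p₁(0)) ≠ (0,0), then there exists c > 0 such that q₁(t)² + p₁(t)² ≥ c for all t; hence the solution of the optimal prediction equations does not decay to zero. -/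
/-- Along any solution of the first-order optimal prediction equations of the Hald
system, `q₁' = p₁ + p₁/(1+p₁²)`, `p₁' = -q₁`, the renormalized Hamiltonian
`Ĥ(q₁,p₁) = (1/2)(q₁² + p₁²) + (1/2)log(1 + p₁²)` is constant in time; in particular,
if the initial data is nonzero, then `q₁² + p₁²` stays bounded away from zero:
the optimal prediction solution does not decay. -/
theorem hald_op_hamiltonian_constant_no_decay
    (q₁ p₁ : ℝ → ℝ)
    (hq₁ : ∀ t, HasDerivAt q₁ (p₁ t + p₁ t / (1 + (p₁ t) ^ 2)) t)
    (hp₁ : ∀ t, HasDerivAt p₁ (-(q₁ t)) t) :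
    (∀ s t : ℝ,
      (1 / 2) * ((q₁ s) ^ 2 + (p₁ s) ^ 2) + (1 / 2) * Real.log (1 + (p₁ s) ^ 2) =
      (1 / 2) * ((q₁ t) ^ 2 + (p₁ t) ^ 2) + (1 / 2) * Real.log (1 + (p₁ t) ^ 2)) ∧
    ((q₁ 0, p₁ 0) ≠ (0, 0) →
      ∃ c > 0, ∀ t : ℝ, c ≤ (q₁ t) ^ 2 + (p₁ t) ^ 2) := by
  set E : ℝ → ℝ := fun t =>
    (1 / 2) * ((q₁ t) ^ 2 + (p₁ t) ^ 2) + (1 / 2) * Real.log (1 + (p₁ t) ^ 2) with hE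
  have hpos : ∀ t, (0:ℝ) < 1 + (p₁ t) ^ 2 := fun t => by positivity
  have hEderiv : ∀ t, HasDerivAt E 0 t := by
    intro t
    have h1 : HasDerivAt (fun t => (q₁ t) ^ 2 + (p₁ t) ^ 2)
        (2 * q₁ t * (p₁ t + p₁ t / (1 + (p₁ t) ^ 2)) + 2 * p₁ t * (-(q₁ t))) t := by
      have := ((hq₁ t).fun_pow 2).add ((hp₁ t).fun_pow 2)
      refine this.congr_deriv ?_
      simp only [Nat.cast_ofNat, Nat.add_one_sub_one, pow_one]
    have h2 : HasDerivAt (fun t => Real.log (1 + (p₁ t) ^ 2))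
        ((2 * p₁ t * (-(q₁ t))) / (1 + (p₁ t) ^ 2)) t := by
      have hinner : HasDerivAt (fun t => 1 + (p₁ t) ^ 2) (2 * p₁ t * (-(q₁ t))) t := by
        have := (hasDerivAt_const t (1:ℝ)).add ((hp₁ t).fun_pow 2)
        refine this.congr_deriv ?_
        simp only [Nat.cast_ofNat, Nat.add_one_sub_one, pow_one]
        ring
      have := hinner.log (hpos t).ne'
      convert this using 1
    have := ((h1.const_mul (1/2 : ℝ)).add (h2.const_mul (1/2 : ℝ)))
    refine this.congr_deriv ?_
    have hne := (hpos t).ne'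
    field_simp
    ring
  have hconst : ∀ s t : ℝ, E s = E t :=
    is_const_of_deriv_eq_zero (fun x => (hEderiv x).differentiableAt)
      (fun x => (hEderiv x).deriv)
  constructor
  · exact hconst
  · intro h0
    have h0' : (q₁ 0) ^ 2 + (p₁ 0) ^ 2 > 0 := by
      have : q₁ 0 ≠ 0 ∨ p₁ 0 ≠ 0 := by
        by_contra hc
        push_neg at hc
        exact h0 (by simp [hc.1, hc.2])
      rcases this with h | h <;> positivity
    have hE0 : 0 < E 0 := by
      have hlog : 0 ≤ Real.log (1 + (p₁ 0) ^ 2) :=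
        Real.log_nonneg (by nlinarith [sq_nonneg (p₁ 0)])
      simp only [hE]
      nlinarith
    refine ⟨E 0, hE0, fun t => ?_⟩
    have hEt : E 0 = E t := hconst 0 t
    have hlogle : Real.log (1 + (p₁ t) ^ 2) ≤ (p₁ t) ^ 2 := by
      have := Real.log_le_sub_one_of_pos (hpos t)
      linarith
    have hEtle : E t ≤ (q₁ t) ^ 2 + (p₁ t) ^ 2 := by
      simp only [hE]
      nlinarith [sq_nonneg (p₁ t)]
    linarith
end

section
/- Let a ∈ ℝ, let u : ℝ × ℝ² → ℝ² and p : ℝ × ℝ² → ℝ be smooth functions that are 2π-periodic in each of the two spatial variables, and suppose that for all (t,x): ∇·u(t,·) = 0 and ∂_t(Au) + (u·∇)(Au) + (∇u)ᵀ·(Au) = -∇p, where A = 1 - a²Δ acts componentwise in the spatial variables, (u·∇)w denotes the vector with components Σ_β u_β ∂_β w_α, and ((∇u)ᵀ·w)_α = Σ_β (∂_α u_β) w_β. Then the energy t ↦ ∫_{[0,2π]²} u(t,x)·(Au)(t,x) dx is constant in t. -/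
open Real MeasureTheory

/-- Partial derivative in the first spatial variable of `f t x y`. -/
noncomputable def pd1 (f : ℝ → ℝ → ℝ → ℝ) : ℝ → ℝ → ℝ → ℝ :=
  fun t x y => deriv (fun x' => f t x' y) x

/-- Partial derivative in the second spatial variable of `f t x y`. -/
noncomputable def pd2 (f : ℝ → ℝ → ℝ → ℝ) : ℝ → ℝ → ℝ → ℝ :=
  fun t x y => deriv (fun y' => f t x y') y

/-- Partial derivative in time of `f t x y`. -/
noncomputable def pdt (f : ℝ → ℝ → ℝ → ℝ) : ℝ → ℝ → ℝ → ℝ :=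
  fun t x y => deriv (fun t' => f t' x y) t

/-- The operator `A = 1 - a²Δ`, acting in the spatial variables. -/
noncomputable def opA (a : ℝ) (f : ℝ → ℝ → ℝ → ℝ) : ℝ → ℝ → ℝ → ℝ :=
  fun t x y => f t x y - a ^ 2 * (pd1 (pd1 f) t x y + pd2 (pd2 f) t x y)

namespace AEaux

/-- Uncurrying of a function of three real variables. -/
def unc (f : ℝ → ℝ → ℝ → ℝ) : ℝ × ℝ × ℝ → ℝ := fun v => f v.1 v.2.1 v.2.2

/-- Smoothness predicate for curried functions of three real variables. -/
def Sm (f : ℝ → ℝ → ℝ → ℝ) : Prop := ContDiff ℝ (⊤ : ℕ∞) (unc f)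

variable {f g : ℝ → ℝ → ℝ → ℝ} {t x y : ℝ}

theorem hda1 (hf : Sm f) (t x y : ℝ) :
    HasDerivAt (fun x' => f t x' y) (fderiv ℝ (unc f) (t, x, y) (0, 1, 0)) x := by
  have hF := (hf.differentiable (by simp) (t, x, y)).hasFDerivAt
  have hL : HasDerivAt (fun x' : ℝ => ((t, x', y) : ℝ × ℝ × ℝ)) ((0 : ℝ), (1 : ℝ), (0 : ℝ)) x :=
    (hasDerivAt_const x t).prodMk ((hasDerivAt_id x).prodMk (hasDerivAt_const x y))
  exact hF.comp_hasDerivAt x hL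

theorem hda2 (hf : Sm f) (t x y : ℝ) :
    HasDerivAt (fun y' => f t x y') (fderiv ℝ (unc f) (t, x, y) (0, 0, 1)) y := by
  have hF := (hf.differentiable (by simp) (t, x, y)).hasFDerivAt
  have hL : HasDerivAt (fun y' : ℝ => ((t, x, y') : ℝ × ℝ × ℝ)) ((0 : ℝ), (0 : ℝ), (1 : ℝ)) y :=
    (hasDerivAt_const y t).prodMk ((hasDerivAt_const y x).prodMk (hasDerivAt_id y))
  exact hF.comp_hasDerivAt y hL

theorem hdat (hf : Sm f) (t x y : ℝ) :
    HasDerivAt (fun t' => f t' x y) (fderiv ℝ (unc f) (t, x, y) (1, 0, 0)) t := by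
  have hF := (hf.differentiable (by simp) (t, x, y)).hasFDerivAt
  have hL : HasDerivAt (fun t' : ℝ => ((t', x, y) : ℝ × ℝ × ℝ)) ((1 : ℝ), (0 : ℝ), (0 : ℝ)) t :=
    (hasDerivAt_id t).prodMk ((hasDerivAt_const t x).prodMk (hasDerivAt_const t y))
  exact hF.comp_hasDerivAt t hL

theorem pd1_eq (hf : Sm f) (t x y : ℝ) :
    pd1 f t x y = fderiv ℝ (unc f) (t, x, y) (0, 1, 0) := (hda1 hf t x y).deriv
theorem pd2_eq (hf : Sm f) (t x y : ℝ) :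
    pd2 f t x y = fderiv ℝ (unc f) (t, x, y) (0, 0, 1) := (hda2 hf t x y).deriv
theorem pdt_eq (hf : Sm f) (t x y : ℝ) :
    pdt f t x y = fderiv ℝ (unc f) (t, x, y) (1, 0, 0) := (hdat hf t x y).deriv

theorem unc_pd1 (hf : Sm f) : unc (pd1 f) = fun v => fderiv ℝ (unc f) v (0, 1, 0) :=
  funext fun v => pd1_eq hf v.1 v.2.1 v.2.2
theorem unc_pd2 (hf : Sm f) : unc (pd2 f) = fun v => fderiv ℝ (unc f) v (0, 0, 1) :=
  funext fun v => pd2_eq hf v.1 v.2.1 v.2.2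
theorem unc_pdt (hf : Sm f) : unc (pdt f) = fun v => fderiv ℝ (unc f) v (1, 0, 0) :=
  funext fun v => pdt_eq hf v.1 v.2.1 v.2.2

theorem Sm.pd1 (hf : Sm f) : Sm (_root_.pd1 f) := by
  rw [Sm, unc_pd1 hf]
  exact (hf.fderiv_right (by simp)).clm_apply contDiff_const
theorem Sm.pd2 (hf : Sm f) : Sm (_root_.pd2 f) := by
  rw [Sm, unc_pd2 hf]
  exact (hf.fderiv_right (by simp)).clm_apply contDiff_const
theorem Sm.pdt (hf : Sm f) : Sm (_root_.pdt f) := by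
  rw [Sm, unc_pdt hf]
  exact (hf.fderiv_right (by simp)).clm_apply contDiff_const

/-- Symmetry of mixed second partial derivatives, `fderiv` form. -/
theorem fderiv_swap (hf : Sm f) (z : ℝ × ℝ × ℝ) (v w : ℝ × ℝ × ℝ) :
    fderiv ℝ (fun z' => fderiv ℝ (unc f) z' v) z w
      = fderiv ℝ (fun z' => fderiv ℝ (unc f) z' w) z v := by
  have hsymm : IsSymmSndFDerivAt ℝ (unc f) z :=
    (hf.contDiffAt).isSymmSndFDerivAt (by rw [minSmoothness_of_isRCLikeNormedField]; exact WithTop.coe_le_coe.mpr le_top)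
  have hd : DifferentiableAt ℝ (fderiv ℝ (unc f)) z :=
    ((hf.fderiv_right (m := 1) (by exact WithTop.coe_le_coe.mpr le_top)).differentiable (by simp)) z
  have h1 : ∀ e : ℝ × ℝ × ℝ, fderiv ℝ (fun z' => fderiv ℝ (unc f) z' e) z
      = (ContinuousLinearMap.apply ℝ ℝ e).comp (fderiv ℝ (fderiv ℝ (unc f)) z) := by
    intro e
    exact (((ContinuousLinearMap.apply ℝ ℝ e).hasFDerivAt).comp z hd.hasFDerivAt).fderiv
  rw [h1 v, h1 w]
  exact hsymm w v

theorem pdt_pd1_comm (hf : Sm f) : pdt (_root_.pd1 f) = _root_.pd1 (pdt f) := by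
  funext t x y
  rw [pdt_eq hf.pd1, pd1_eq hf.pdt, unc_pd1 hf, unc_pdt hf]
  exact fderiv_swap hf (t, x, y) (0, 1, 0) (1, 0, 0)

theorem pdt_pd2_comm (hf : Sm f) : pdt (_root_.pd2 f) = _root_.pd2 (pdt f) := by
  funext t x y
  rw [pdt_eq hf.pd2, pd2_eq hf.pdt, unc_pd2 hf, unc_pdt hf]
  exact fderiv_swap hf (t, x, y) (0, 0, 1) (1, 0, 0)

theorem hs1 (hf : Sm f) (t x y : ℝ) :
    HasDerivAt (fun x' => f t x' y) (pd1 f t x y) x :=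
  (hda1 hf t x y).differentiableAt.hasDerivAt
theorem hs2 (hf : Sm f) (t x y : ℝ) :
    HasDerivAt (fun y' => f t x y') (pd2 f t x y) y :=
  (hda2 hf t x y).differentiableAt.hasDerivAt
theorem hst (hf : Sm f) (t x y : ℝ) :
    HasDerivAt (fun t' => f t' x y) (pdt f t x y) t :=
  (hdat hf t x y).differentiableAt.hasDerivAt

theorem Sm.mul (hf : Sm f) (hg : Sm g) : Sm (fun t x y => f t x y * g t x y) :=
  ContDiff.mul hf hg
theorem Sm.add (hf : Sm f) (hg : Sm g) : Sm (fun t x y => f t x y + g t x y) :=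
  ContDiff.add hf hg
theorem Sm.sub (hf : Sm f) (hg : Sm g) : Sm (fun t x y => f t x y - g t x y) :=
  ContDiff.sub hf hg
theorem Sm.cmul (c : ℝ) (hf : Sm f) : Sm (fun t x y => c * f t x y) :=
  ContDiff.mul contDiff_const hf

theorem Sm.opA (a : ℝ) (hf : Sm f) : Sm (_root_.opA a f) :=
  ContDiff.sub hf (ContDiff.mul contDiff_const ((hf.pd1.pd1).add (hf.pd2.pd2)))

/-- First component of the flux vector field. -/
noncomputable def GG1 (a : ℝ) (u₁ u₂ p : ℝ → ℝ → ℝ → ℝ) : ℝ → ℝ → ℝ → ℝ := fun t x y =>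
  a ^ 2 * (u₁ t x y * pd1 (pdt u₁) t x y - pdt u₁ t x y * pd1 u₁ t x y
      + (u₂ t x y * pd1 (pdt u₂) t x y - pdt u₂ t x y * pd1 u₂ t x y))
    - 2 * (u₁ t x y * (u₁ t x y * opA a u₁ t x y + u₂ t x y * opA a u₂ t x y))
    - 2 * (u₁ t x y * p t x y)

/-- Second component of the flux vector field. -/
noncomputable def GG2 (a : ℝ) (u₁ u₂ p : ℝ → ℝ → ℝ → ℝ) : ℝ → ℝ → ℝ → ℝ := fun t x y =>
  a ^ 2 * (u₁ t x y * pd2 (pdt u₁) t x y - pdt u₁ t x y * pd2 u₁ t x y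
      + (u₂ t x y * pd2 (pdt u₂) t x y - pdt u₂ t x y * pd2 u₂ t x y))
    - 2 * (u₂ t x y * (u₁ t x y * opA a u₁ t x y + u₂ t x y * opA a u₂ t x y))
    - 2 * (u₂ t x y * p t x y)

theorem key (a : ℝ) (u₁ u₂ p : ℝ → ℝ → ℝ → ℝ)
    (hu₁ : Sm u₁) (hu₂ : Sm u₂) (hp : Sm p)
    (hdiv : ∀ t x y, pd1 u₁ t x y + pd2 u₂ t x y = 0)
    (hpde1 : ∀ t x y,
      pdt (opA a u₁) t x y + (u₁ t x y * pd1 (opA a u₁) t x y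
          + u₂ t x y * pd2 (opA a u₁) t x y)
        + (pd1 u₁ t x y * opA a u₁ t x y + pd1 u₂ t x y * opA a u₂ t x y)
        = -pd1 p t x y)
    (hpde2 : ∀ t x y,
      pdt (opA a u₂) t x y + (u₁ t x y * pd1 (opA a u₂) t x y
          + u₂ t x y * pd2 (opA a u₂) t x y)
        + (pd2 u₁ t x y * opA a u₁ t x y + pd2 u₂ t x y * opA a u₂ t x y)
        = -pd2 p t x y) (t x y : ℝ) :
    pdt (fun t x y => u₁ t x y * opA a u₁ t x y + u₂ t x y * opA a u₂ t x y) t x y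
      = pd1 (GG1 a u₁ u₂ p) t x y + pd2 (GG2 a u₁ u₂ p) t x y := by
  have sA1 : Sm (opA a u₁) := Sm.opA a hu₁
  have sA2 : Sm (opA a u₂) := Sm.opA a hu₂
  have eA1t : pdt (opA a u₁) t x y = _ :=
    ((hst hu₁ t x y).sub (HasDerivAt.const_mul (a ^ 2)
      ((hst hu₁.pd1.pd1 t x y).add (hst hu₁.pd2.pd2 t x y)))).deriv
  have eA2t : pdt (opA a u₂) t x y = _ :=
    ((hst hu₂ t x y).sub (HasDerivAt.const_mul (a ^ 2)
      ((hst hu₂.pd1.pd1 t x y).add (hst hu₂.pd2.pd2 t x y)))).deriv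
  have eA1x : pd1 (opA a u₁) t x y = _ :=
    ((hs1 hu₁ t x y).sub (HasDerivAt.const_mul (a ^ 2)
      ((hs1 hu₁.pd1.pd1 t x y).add (hs1 hu₁.pd2.pd2 t x y)))).deriv
  have eA2x : pd1 (opA a u₂) t x y = _ :=
    ((hs1 hu₂ t x y).sub (HasDerivAt.const_mul (a ^ 2)
      ((hs1 hu₂.pd1.pd1 t x y).add (hs1 hu₂.pd2.pd2 t x y)))).deriv
  have eA1y : pd2 (opA a u₁) t x y = _ :=
    ((hs2 hu₁ t x y).sub (HasDerivAt.const_mul (a ^ 2)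
      ((hs2 hu₁.pd1.pd1 t x y).add (hs2 hu₁.pd2.pd2 t x y)))).deriv
  have eA2y : pd2 (opA a u₂) t x y = _ :=
    ((hs2 hu₂ t x y).sub (HasDerivAt.const_mul (a ^ 2)
      ((hs2 hu₂.pd1.pd1 t x y).add (hs2 hu₂.pd2.pd2 t x y)))).deriv
  have eL : pdt (fun t x y => u₁ t x y * opA a u₁ t x y + u₂ t x y * opA a u₂ t x y) t x y = _ :=
    (((hst hu₁ t x y).mul (hst sA1 t x y)).add ((hst hu₂ t x y).mul (hst sA2 t x y))).deriv
  have eG1 : pd1 (GG1 a u₁ u₂ p) t x y = _ :=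
    ((HasDerivAt.const_mul (a ^ 2)
        ((((hs1 hu₁ t x y).mul (hs1 hu₁.pdt.pd1 t x y)).sub
            ((hs1 hu₁.pdt t x y).mul (hs1 hu₁.pd1 t x y))).add
          (((hs1 hu₂ t x y).mul (hs1 hu₂.pdt.pd1 t x y)).sub
            ((hs1 hu₂.pdt t x y).mul (hs1 hu₂.pd1 t x y))))).sub
      (HasDerivAt.const_mul 2 ((hs1 hu₁ t x y).mul
        (((hs1 hu₁ t x y).mul (hs1 sA1 t x y)).add
          ((hs1 hu₂ t x y).mul (hs1 sA2 t x y)))))).sub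
      (HasDerivAt.const_mul 2 ((hs1 hu₁ t x y).mul (hs1 hp t x y))) |>.deriv
  have eG2 : pd2 (GG2 a u₁ u₂ p) t x y = _ :=
    ((HasDerivAt.const_mul (a ^ 2)
        ((((hs2 hu₁ t x y).mul (hs2 hu₁.pdt.pd2 t x y)).sub
            ((hs2 hu₁.pdt t x y).mul (hs2 hu₁.pd2 t x y))).add
          (((hs2 hu₂ t x y).mul (hs2 hu₂.pdt.pd2 t x y)).sub
            ((hs2 hu₂.pdt t x y).mul (hs2 hu₂.pd2 t x y))))).sub
      (HasDerivAt.const_mul 2 ((hs2 hu₂ t x y).mul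
        (((hs2 hu₁ t x y).mul (hs2 sA1 t x y)).add
          ((hs2 hu₂ t x y).mul (hs2 sA2 t x y)))))).sub
      (HasDerivAt.const_mul 2 ((hs2 hu₂ t x y).mul (hs2 hp t x y))) |>.deriv
  have h1 := hpde1 t x y
  have h2 := hpde2 t x y
  have hd := hdiv t x y
  rw [eA1t, eA1x, eA1y, pdt_pd1_comm hu₁.pd1, pdt_pd1_comm hu₁, pdt_pd2_comm hu₁.pd2,
    pdt_pd2_comm hu₁] at h1
  rw [eA2t, eA2x, eA2y, pdt_pd1_comm hu₂.pd1, pdt_pd1_comm hu₂, pdt_pd2_comm hu₂.pd2,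
    pdt_pd2_comm hu₂] at h2
  rw [eL, eG1, eG2, eA1t, eA2t, eA1x, eA2x, eA1y, eA2y,
    pdt_pd1_comm hu₁.pd1, pdt_pd1_comm hu₁, pdt_pd2_comm hu₁.pd2, pdt_pd2_comm hu₁,
    pdt_pd1_comm hu₂.pd1, pdt_pd1_comm hu₂, pdt_pd2_comm hu₂.pd2, pdt_pd2_comm hu₂]
  simp only [opA, Pi.mul_apply, Pi.add_apply, Pi.sub_apply] at h1 h2 ⊢
  linear_combination (2 * u₁ t x y) * h1 + (2 * u₂ t x y) * h2
    + (2 * (u₁ t x y * (u₁ t x y - a ^ 2 * (pd1 (pd1 u₁) t x y + pd2 (pd2 u₁) t x y))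
      + u₂ t x y * (u₂ t x y - a ^ 2 * (pd1 (pd1 u₂) t x y + pd2 (pd2 u₂) t x y))
      + p t x y)) * hd

theorem perx_pd1 (hf : ∀ t x y, f t (x + 2 * π) y = f t x y) :
    ∀ t x y, pd1 f t (x + 2 * π) y = pd1 f t x y := by
  intro t x y
  show deriv (fun x' => f t x' y) (x + 2 * π) = deriv (fun x' => f t x' y) x
  rw [← deriv_comp_add_const (fun x' => f t x' y) (2 * π) x]
  congr 1
  funext x'
  exact hf t x' y

theorem perx_pd2 (hf : ∀ t x y, f t (x + 2 * π) y = f t x y) :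
    ∀ t x y, pd2 f t (x + 2 * π) y = pd2 f t x y := by
  intro t x y
  show deriv (fun y' => f t (x + 2 * π) y') y = deriv (fun y' => f t x y') y
  congr 1
  funext y'
  exact hf t x y'

theorem perx_pdt (hf : ∀ t x y, f t (x + 2 * π) y = f t x y) :
    ∀ t x y, pdt f t (x + 2 * π) y = pdt f t x y := by
  intro t x y
  show deriv (fun t' => f t' (x + 2 * π) y) t = deriv (fun t' => f t' x y) t
  congr 1
  funext t'
  exact hf t' x y

theorem pery_pd2 (hf : ∀ t x y, f t x (y + 2 * π) = f t x y) :
    ∀ t x y, pd2 f t x (y + 2 * π) = pd2 f t x y := by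
  intro t x y
  show deriv (fun y' => f t x y') (y + 2 * π) = deriv (fun y' => f t x y') y
  rw [← deriv_comp_add_const (fun y' => f t x y') (2 * π) y]
  congr 1
  funext y'
  exact hf t x y'

theorem pery_pd1 (hf : ∀ t x y, f t x (y + 2 * π) = f t x y) :
    ∀ t x y, pd1 f t x (y + 2 * π) = pd1 f t x y := by
  intro t x y
  show deriv (fun x' => f t x' (y + 2 * π)) x = deriv (fun x' => f t x' y) x
  congr 1
  funext x'
  exact hf t x' y

theorem pery_pdt (hf : ∀ t x y, f t x (y + 2 * π) = f t x y) :
    ∀ t x y, pdt f t x (y + 2 * π) = pdt f t x y := by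
  intro t x y
  show deriv (fun t' => f t' x (y + 2 * π)) t = deriv (fun t' => f t' x y) t
  congr 1
  funext t'
  exact hf t' x y

section per
variable {a : ℝ} {u₁ u₂ p : ℝ → ℝ → ℝ → ℝ}

theorem GG1_perx (h1x : ∀ t x y, u₁ t (x + 2 * π) y = u₁ t x y)
    (h2x : ∀ t x y, u₂ t (x + 2 * π) y = u₂ t x y)
    (hpx : ∀ t x y, p t (x + 2 * π) y = p t x y) :
    ∀ t x y, GG1 a u₁ u₂ p t (x + 2 * π) y = GG1 a u₁ u₂ p t x y := by
  intro t x y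
  simp only [GG1, opA, h1x, h2x, hpx, perx_pd1 h1x, perx_pd1 h2x, perx_pdt h1x, perx_pdt h2x,
    perx_pd1 (perx_pdt h1x), perx_pd1 (perx_pdt h2x),
    perx_pd1 (perx_pd1 h1x), perx_pd1 (perx_pd1 h2x),
    perx_pd2 (perx_pd2 h1x), perx_pd2 (perx_pd2 h2x)]

theorem GG2_pery (h1y : ∀ t x y, u₁ t x (y + 2 * π) = u₁ t x y)
    (h2y : ∀ t x y, u₂ t x (y + 2 * π) = u₂ t x y)
    (hpy : ∀ t x y, p t x (y + 2 * π) = p t x y) :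
    ∀ t x y, GG2 a u₁ u₂ p t x (y + 2 * π) = GG2 a u₁ u₂ p t x y := by
  intro t x y
  simp only [GG2, opA, h1y, h2y, hpy, pery_pd2 h1y, pery_pd2 h2y, pery_pdt h1y, pery_pdt h2y,
    pery_pd2 (pery_pdt h1y), pery_pd2 (pery_pdt h2y),
    pery_pd1 (pery_pd1 h1y), pery_pd1 (pery_pd1 h2y),
    pery_pd2 (pery_pd2 h1y), pery_pd2 (pery_pd2 h2y)]

end per
end AEaux


/-- The two-dimensional Averaged Euler equations
`∂ₜ(Au) + (u·∇)(Au) + (∇u)ᵀ·(Au) = -∇p`, `∇·u = 0`, with `A = 1 - a²Δ`, on the periodic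
box `[0,2π]²`, conserve the energy `(u, Au) = ∫ u·(Au) dx`. -/
theorem averaged_euler_energy_conserved (a : ℝ) (u₁ u₂ p : ℝ → ℝ → ℝ → ℝ)
    (hu₁ : ContDiff ℝ (⊤ : ℕ∞) fun v : ℝ × ℝ × ℝ => u₁ v.1 v.2.1 v.2.2)
    (hu₂ : ContDiff ℝ (⊤ : ℕ∞) fun v : ℝ × ℝ × ℝ => u₂ v.1 v.2.1 v.2.2)
    (hp : ContDiff ℝ (⊤ : ℕ∞) fun v : ℝ × ℝ × ℝ => p v.1 v.2.1 v.2.2)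
    (hu₁x : ∀ t x y, u₁ t (x + 2 * π) y = u₁ t x y)
    (hu₁y : ∀ t x y, u₁ t x (y + 2 * π) = u₁ t x y)
    (hu₂x : ∀ t x y, u₂ t (x + 2 * π) y = u₂ t x y)
    (hu₂y : ∀ t x y, u₂ t x (y + 2 * π) = u₂ t x y)
    (hpx : ∀ t x y, p t (x + 2 * π) y = p t x y)
    (hpy : ∀ t x y, p t x (y + 2 * π) = p t x y)
    (hdiv : ∀ t x y, pd1 u₁ t x y + pd2 u₂ t x y = 0)
    (hpde1 : ∀ t x y,
      pdt (opA a u₁) t x y + (u₁ t x y * pd1 (opA a u₁) t x y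
          + u₂ t x y * pd2 (opA a u₁) t x y)
        + (pd1 u₁ t x y * opA a u₁ t x y + pd1 u₂ t x y * opA a u₂ t x y)
        = -pd1 p t x y)
    (hpde2 : ∀ t x y,
      pdt (opA a u₂) t x y + (u₁ t x y * pd1 (opA a u₂) t x y
          + u₂ t x y * pd2 (opA a u₂) t x y)
        + (pd2 u₁ t x y * opA a u₁ t x y + pd2 u₂ t x y * opA a u₂ t x y)
        = -pd2 p t x y) :
    ∀ s t : ℝ,
      (∫ x in Set.Icc (0 : ℝ) (2 * π), ∫ y in Set.Icc (0 : ℝ) (2 * π),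
        (u₁ s x y * opA a u₁ s x y + u₂ s x y * opA a u₂ s x y)) =
      (∫ x in Set.Icc (0 : ℝ) (2 * π), ∫ y in Set.Icc (0 : ℝ) (2 * π),
        (u₁ t x y * opA a u₁ t x y + u₂ t x y * opA a u₂ t x y)) := by
  intro s t
  have su₁ : AEaux.Sm u₁ := hu₁
  have su₂ : AEaux.Sm u₂ := hu₂
  have sp : AEaux.Sm p := hp
  have sA1 : AEaux.Sm (opA a u₁) := AEaux.Sm.opA a su₁
  have sA2 : AEaux.Sm (opA a u₂) := AEaux.Sm.opA a su₂
  have sF : AEaux.Sm (fun t x y => u₁ t x y * opA a u₁ t x y + u₂ t x y * opA a u₂ t x y) :=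
    AEaux.Sm.add (AEaux.Sm.mul su₁ sA1) (AEaux.Sm.mul su₂ sA2)
  have sG1 : AEaux.Sm (AEaux.GG1 a u₁ u₂ p) :=
    AEaux.Sm.sub (AEaux.Sm.sub (AEaux.Sm.cmul (a ^ 2)
        (AEaux.Sm.add (AEaux.Sm.sub (AEaux.Sm.mul su₁ su₁.pdt.pd1)
            (AEaux.Sm.mul su₁.pdt su₁.pd1))
          (AEaux.Sm.sub (AEaux.Sm.mul su₂ su₂.pdt.pd1) (AEaux.Sm.mul su₂.pdt su₂.pd1))))
      (AEaux.Sm.cmul 2 (AEaux.Sm.mul su₁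
        (AEaux.Sm.add (AEaux.Sm.mul su₁ sA1) (AEaux.Sm.mul su₂ sA2)))))
      (AEaux.Sm.cmul 2 (AEaux.Sm.mul su₁ sp))
  have sG2 : AEaux.Sm (AEaux.GG2 a u₁ u₂ p) :=
    AEaux.Sm.sub (AEaux.Sm.sub (AEaux.Sm.cmul (a ^ 2)
        (AEaux.Sm.add (AEaux.Sm.sub (AEaux.Sm.mul su₁ su₁.pdt.pd2)
            (AEaux.Sm.mul su₁.pdt su₁.pd2))
          (AEaux.Sm.sub (AEaux.Sm.mul su₂ su₂.pdt.pd2) (AEaux.Sm.mul su₂.pdt su₂.pd2))))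
      (AEaux.Sm.cmul 2 (AEaux.Sm.mul su₂
        (AEaux.Sm.add (AEaux.Sm.mul su₁ sA1) (AEaux.Sm.mul su₂ sA2)))))
      (AEaux.Sm.cmul 2 (AEaux.Sm.mul su₂ sp))
  set I : Set ℝ := Set.Icc (0 : ℝ) (2 * π) with hI
  set μ : Measure (ℝ × ℝ) := (volume.restrict I).prod (volume.restrict I) with hμ
  haveI : IsFiniteMeasure (volume.restrict I) := by
    constructor
    rw [Measure.restrict_apply_univ, hI, Real.volume_Icc]
    exact ENNReal.ofReal_lt_top
  -- continuity of slices in the space variables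
  have hcont3 : ∀ {g : ℝ → ℝ → ℝ → ℝ}, AEaux.Sm g → ∀ r : ℝ,
      Continuous (fun z : ℝ × ℝ => g r z.1 z.2) := fun hg r =>
    (ContDiff.continuous hg).comp (continuous_const.prodMk
      (continuous_fst.prodMk continuous_snd))
  have hcontx : ∀ {g : ℝ → ℝ → ℝ → ℝ}, AEaux.Sm g → ∀ (r y : ℝ),
      Continuous (fun w : ℝ => g r w y) := fun hg r y =>
    (ContDiff.continuous hg).comp (continuous_const.prodMk
      (continuous_id.prodMk continuous_const))
  have hconty : ∀ {g : ℝ → ℝ → ℝ → ℝ}, AEaux.Sm g → ∀ (r x : ℝ),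
      Continuous (fun w : ℝ => g r x w) := fun hg r x =>
    (ContDiff.continuous hg).comp (continuous_const.prodMk
      (continuous_const.prodMk continuous_id))
  have hint : ∀ {g : ℝ × ℝ → ℝ}, Continuous g → Integrable g μ := by
    intro g hg
    rw [hμ, Measure.prod_restrict]
    exact hg.continuousOn.integrableOn_compact (isCompact_Icc.prod isCompact_Icc)
  set E : ℝ → ℝ := fun r => ∫ z : ℝ × ℝ,
    (u₁ r z.1 z.2 * opA a u₁ r z.1 z.2 + u₂ r z.1 z.2 * opA a u₂ r z.1 z.2) ∂μ with hE
  -- the energy has zero derivative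
  have hEderiv : ∀ r, HasDerivAt E 0 r := by
    intro r
    obtain ⟨C, hC⟩ := IsCompact.exists_bound_of_continuousOn
      ((isCompact_Icc (a := r - 1) (b := r + 1)).prod (isCompact_Icc.prod isCompact_Icc))
      (ContDiff.continuous (AEaux.Sm.pdt sF)).continuousOn
    have hae : ∀ᵐ z ∂μ, z ∈ I ×ˢ I := by
      rw [hμ, Measure.prod_restrict]
      exact ae_restrict_mem (measurableSet_Icc.prod measurableSet_Icc)
    have main := hasDerivAt_integral_of_dominated_loc_of_deriv_le (μ := μ) (x₀ := r)
      (F := fun r' (z : ℝ × ℝ) =>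
        u₁ r' z.1 z.2 * opA a u₁ r' z.1 z.2 + u₂ r' z.1 z.2 * opA a u₂ r' z.1 z.2)
      (F' := fun r' (z : ℝ × ℝ) =>
        pdt (fun t x y => u₁ t x y * opA a u₁ t x y + u₂ t x y * opA a u₂ t x y) r' z.1 z.2)
      (bound := fun _ => C) (s := Metric.ball r 1) (Metric.ball_mem_nhds r one_pos)
      (Filter.Eventually.of_forall fun r' => (hcont3 sF r').aestronglyMeasurable)
      (hint (hcont3 sF r))
      ((hcont3 (AEaux.Sm.pdt sF) r).aestronglyMeasurable)
      (hae.mono fun z hz r' hr' => by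
        have h1 : |r' - r| < 1 := by
          rw [Metric.mem_ball, Real.dist_eq] at hr'
          exact hr'
        have h2 := abs_lt.mp h1
        exact hC (r', z.1, z.2) ⟨⟨by linarith, by linarith⟩, ⟨hz.1, hz.2⟩⟩)
      (integrable_const C)
      (hae.mono fun z _ r' _ => AEaux.hst sF r' z.1 z.2)
    have hzero : (∫ z : ℝ × ℝ,
        pdt (fun t x y => u₁ t x y * opA a u₁ t x y + u₂ t x y * opA a u₂ t x y) r z.1 z.2 ∂μ)
        = 0 := by
      have hKey : (fun z : ℝ × ℝ =>
          pdt (fun t x y => u₁ t x y * opA a u₁ t x y + u₂ t x y * opA a u₂ t x y) r z.1 z.2)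
          = fun z : ℝ × ℝ => AEaux.GG1 a u₁ u₂ p |> (fun G => pd1 G r z.1 z.2 + pd2 (AEaux.GG2 a u₁ u₂ p) r z.1 z.2) :=
        funext fun z => AEaux.key a u₁ u₂ p su₁ su₂ sp hdiv hpde1 hpde2 r z.1 z.2
      rw [hKey]
      rw [integral_add (hint (hcont3 (AEaux.Sm.pd1 sG1) r)) (hint (hcont3 (AEaux.Sm.pd2 sG2) r))]
      have h1 : (∫ z : ℝ × ℝ, pd1 (AEaux.GG1 a u₁ u₂ p) r z.1 z.2 ∂μ) = 0 := by
        rw [hμ, integral_prod_symm _ (by rw [← hμ]; exact hint (hcont3 (AEaux.Sm.pd1 sG1) r))]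
        have inner : ∀ y : ℝ, (∫ x in I, pd1 (AEaux.GG1 a u₁ u₂ p) r x y) = 0 := by
          intro y
          rw [hI, integral_Icc_eq_integral_Ioc,
            ← intervalIntegral.integral_of_le (by positivity : (0 : ℝ) ≤ 2 * π)]
          have hftc : (∫ w in (0 : ℝ)..(2 * π),
              deriv (fun x' => AEaux.GG1 a u₁ u₂ p r x' y) w)
              = AEaux.GG1 a u₁ u₂ p r (2 * π) y - AEaux.GG1 a u₁ u₂ p r 0 y :=
            intervalIntegral.integral_deriv_eq_sub
              (fun w _ => (AEaux.hs1 sG1 r w y).differentiableAt)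
              ((hcontx (AEaux.Sm.pd1 sG1) r y).intervalIntegrable 0 (2 * π))
          have hper : AEaux.GG1 a u₁ u₂ p r (2 * π) y = AEaux.GG1 a u₁ u₂ p r 0 y := by
            have h0 := AEaux.GG1_perx (a := a) hu₁x hu₂x hpx r 0 y
            rw [zero_add] at h0
            exact h0
          exact hftc.trans (by rw [hper, sub_self])
        calc (∫ (y : ℝ) in I, ∫ (x : ℝ) in I, pd1 (AEaux.GG1 a u₁ u₂ p) r x y)
            = ∫ (y : ℝ) in I, (0 : ℝ) := by
              exact integral_congr_ae (Filter.Eventually.of_forall fun y => inner y)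
          _ = 0 := integral_zero _ _
      have h2 : (∫ z : ℝ × ℝ, pd2 (AEaux.GG2 a u₁ u₂ p) r z.1 z.2 ∂μ) = 0 := by
        rw [hμ, integral_prod _ (by rw [← hμ]; exact hint (hcont3 (AEaux.Sm.pd2 sG2) r))]
        have inner : ∀ x : ℝ, (∫ y in I, pd2 (AEaux.GG2 a u₁ u₂ p) r x y) = 0 := by
          intro x
          rw [hI, integral_Icc_eq_integral_Ioc,
            ← intervalIntegral.integral_of_le (by positivity : (0 : ℝ) ≤ 2 * π)]
          have hftc : (∫ w in (0 : ℝ)..(2 * π),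
              deriv (fun y' => AEaux.GG2 a u₁ u₂ p r x y') w)
              = AEaux.GG2 a u₁ u₂ p r x (2 * π) - AEaux.GG2 a u₁ u₂ p r x 0 :=
            intervalIntegral.integral_deriv_eq_sub
              (fun w _ => (AEaux.hs2 sG2 r x w).differentiableAt)
              ((hconty (AEaux.Sm.pd2 sG2) r x).intervalIntegrable 0 (2 * π))
          have hper : AEaux.GG2 a u₁ u₂ p r x (2 * π) = AEaux.GG2 a u₁ u₂ p r x 0 := by
            have h0 := AEaux.GG2_pery (a := a) hu₁y hu₂y hpy r x 0
            rw [zero_add] at h0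
            exact h0
          exact hftc.trans (by rw [hper, sub_self])
        calc (∫ (x : ℝ) in I, ∫ (y : ℝ) in I, pd2 (AEaux.GG2 a u₁ u₂ p) r x y)
            = ∫ (x : ℝ) in I, (0 : ℝ) := by
              exact integral_congr_ae (Filter.Eventually.of_forall fun x => inner x)
          _ = 0 := integral_zero _ _
      rw [h1, h2, add_zero]
    have hfin := main.2
    rw [hzero] at hfin
    exact hfin
  have hEconst : E s = E t :=
    is_const_of_deriv_eq_zero (fun r => (hEderiv r).differentiableAt)
      (fun r => (hEderiv r).deriv) s t
  have hiter : ∀ r : ℝ,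
      (∫ x in Set.Icc (0 : ℝ) (2 * π), ∫ y in Set.Icc (0 : ℝ) (2 * π),
        (u₁ r x y * opA a u₁ r x y + u₂ r x y * opA a u₂ r x y)) = E r := by
    intro r
    rw [hE, hμ]
    exact (integral_prod _ (by rw [← hμ]; exact hint (hcont3 sF r))).symm
  rw [hiter s, hiter t, hEconst]
end

section
/- Let a ∈ ℝ, let u : ℝ × ℝ² → ℝ² and p : ℝ × ℝ² → ℝ be smooth functions that are 2π-periodic in each of the two spatial variables, and suppose that for all (t,x): ∇·u(t,·) = 0 and ∂_t(Au) + (u·∇)(Au) + (∇u)ᵀ·(Au) = -∇p, where A = 1 - a²Δ acts componentwise in the spatial variables, (u·∇)w denotes the vector with components Σ_β u_β ∂_β w_α, and ((∇u)ᵀ·w)_α = Σ_β (∂_α u_β) w_β. Let ξ = ∂_1 u_2 - ∂_2 u_1 denote the vorticity. Then the enstrophy t ↦ ∫_{[0,2π]²} ((Aξ)(t,x))² dx is constant in t. -/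
open Real MeasureTheory

namespace AEE

/-- uncurried version -/
def unc (f : ℝ → ℝ → ℝ → ℝ) : ℝ × ℝ × ℝ → ℝ := fun v => f v.1 v.2.1 v.2.2

def Sm (f : ℝ → ℝ → ℝ → ℝ) : Prop := ContDiff ℝ (⊤ : ℕ∞) (unc f)

lemma Sm.diffU {f : ℝ → ℝ → ℝ → ℝ} (hf : Sm f) : Differentiable ℝ (unc f) :=
  (contDiff_infty_iff_fderiv.mp hf).1

lemma Sm.fderivSm {f : ℝ → ℝ → ℝ → ℝ} (hf : Sm f) :
    ContDiff ℝ (⊤ : ℕ∞) (fderiv ℝ (unc f)) := (contDiff_infty_iff_fderiv.mp hf).2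

/-- directional derivative of an uncurried function -/
noncomputable def dv (e : ℝ × ℝ × ℝ) (U : ℝ × ℝ × ℝ → ℝ) : ℝ × ℝ × ℝ → ℝ :=
  fun v => fderiv ℝ U v e

lemma Sm.contDiff_dv {f : ℝ → ℝ → ℝ → ℝ} (hf : Sm f) (e : ℝ × ℝ × ℝ) :
    ContDiff ℝ (⊤ : ℕ∞) (dv e (unc f)) :=
  hf.fderivSm.clm_apply contDiff_const

-- the affine section maps
lemma hasDerivAt_sec1 (t x y : ℝ) :
    HasDerivAt (fun x' : ℝ => ((t, x', y) : ℝ × ℝ × ℝ)) ((0,1,0) : ℝ × ℝ × ℝ) x :=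
  HasDerivAt.prodMk (hasDerivAt_const x t) (HasDerivAt.prodMk (hasDerivAt_id x) (hasDerivAt_const x y))
lemma hasDerivAt_sec2 (t x y : ℝ) :
    HasDerivAt (fun y' : ℝ => ((t, x, y') : ℝ × ℝ × ℝ)) ((0,0,1) : ℝ × ℝ × ℝ) y :=
  HasDerivAt.prodMk (hasDerivAt_const y t) (HasDerivAt.prodMk (hasDerivAt_const y x) (hasDerivAt_id y))
lemma hasDerivAt_sect (t x y : ℝ) :
    HasDerivAt (fun t' : ℝ => ((t', x, y) : ℝ × ℝ × ℝ)) ((1,0,0) : ℝ × ℝ × ℝ) t :=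
  HasDerivAt.prodMk (hasDerivAt_id t) (HasDerivAt.prodMk (hasDerivAt_const t x) (hasDerivAt_const t y))

lemma Sm.hd1 {f : ℝ → ℝ → ℝ → ℝ} (hf : Sm f) (t x y : ℝ) :
    HasDerivAt (fun x' => f t x' y) (dv (0,1,0) (AEE.unc f) (t,x,y)) x := by
  have h := (hf.diffU (t,x,y)).hasFDerivAt
  have := h.comp_hasDerivAt x (hasDerivAt_sec1 t x y)
  simpa [unc, dv, Function.comp_def] using this

lemma Sm.hd2 {f : ℝ → ℝ → ℝ → ℝ} (hf : Sm f) (t x y : ℝ) :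
    HasDerivAt (fun y' => f t x y') (dv (0,0,1) (AEE.unc f) (t,x,y)) y := by
  have h := (hf.diffU (t,x,y)).hasFDerivAt
  have := h.comp_hasDerivAt y (hasDerivAt_sec2 t x y)
  simpa [unc, dv, Function.comp_def] using this

lemma Sm.hdt {f : ℝ → ℝ → ℝ → ℝ} (hf : Sm f) (t x y : ℝ) :
    HasDerivAt (fun t' => f t' x y) (dv (1,0,0) (AEE.unc f) (t,x,y)) t := by
  have h := (hf.diffU (t,x,y)).hasFDerivAt
  have := h.comp_hasDerivAt t (hasDerivAt_sect t x y)
  simpa [unc, dv, Function.comp_def] using this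

lemma pd1_eq {f : ℝ → ℝ → ℝ → ℝ} (hf : Sm f) (t x y : ℝ) :
    pd1 f t x y = dv (0,1,0) (unc f) (t,x,y) := (hf.hd1 t x y).deriv
lemma pd2_eq {f : ℝ → ℝ → ℝ → ℝ} (hf : Sm f) (t x y : ℝ) :
    pd2 f t x y = dv (0,0,1) (unc f) (t,x,y) := (hf.hd2 t x y).deriv
lemma pdt_eq {f : ℝ → ℝ → ℝ → ℝ} (hf : Sm f) (t x y : ℝ) :
    pdt f t x y = dv (1,0,0) (unc f) (t,x,y) := (hf.hdt t x y).deriv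

lemma unc_pd1 {f : ℝ → ℝ → ℝ → ℝ} (hf : Sm f) : unc (pd1 f) = dv (0,1,0) (unc f) := by
  funext v; exact pd1_eq hf v.1 v.2.1 v.2.2
lemma unc_pd2 {f : ℝ → ℝ → ℝ → ℝ} (hf : Sm f) : unc (pd2 f) = dv (0,0,1) (unc f) := by
  funext v; exact pd2_eq hf v.1 v.2.1 v.2.2
lemma unc_pdt {f : ℝ → ℝ → ℝ → ℝ} (hf : Sm f) : unc (pdt f) = dv (1,0,0) (unc f) := by
  funext v; exact pdt_eq hf v.1 v.2.1 v.2.2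

lemma Sm.p1 {f : ℝ → ℝ → ℝ → ℝ} (hf : Sm f) : Sm (_root_.pd1 f) := by
  unfold Sm; rw [unc_pd1 hf]; exact hf.contDiff_dv _
lemma Sm.p2 {f : ℝ → ℝ → ℝ → ℝ} (hf : Sm f) : Sm (_root_.pd2 f) := by
  unfold Sm; rw [unc_pd2 hf]; exact hf.contDiff_dv _
lemma Sm.pt {f : ℝ → ℝ → ℝ → ℝ} (hf : Sm f) : Sm (_root_.pdt f) := by
  unfold Sm; rw [unc_pdt hf]; exact hf.contDiff_dv _

/-- Schwarz for directional derivatives -/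
lemma Sm.dv_comm {f : ℝ → ℝ → ℝ → ℝ} (hf : Sm f) (e e' v : ℝ × ℝ × ℝ) :
    dv e (dv e' (unc f)) v = dv e' (dv e (unc f)) v := by
  set U := unc f
  have hdiffU : ∀ w, HasFDerivAt U (fderiv ℝ U w) w := fun w => (hf.diffU w).hasFDerivAt
  have hdd : HasFDerivAt (fderiv ℝ U) (fderiv ℝ (fderiv ℝ U) v) v :=
    (hf.fderivSm.differentiable (by simp) v).hasFDerivAt
  have hsymm := second_derivative_symmetric hdiffU hdd e e'
  have key : ∀ c : ℝ × ℝ × ℝ,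
      fderiv ℝ (fun w => fderiv ℝ U w c) v = (fderiv ℝ (fderiv ℝ U) v).flip c := by
    intro c
    have := fderiv_clm_apply (c := fderiv ℝ U) (u := fun _ => c)
      (hf.fderivSm.differentiable (by simp) v) (differentiableAt_const c)
    simpa using this
  show fderiv ℝ (fun w => fderiv ℝ U w e') v e = fderiv ℝ (fun w => fderiv ℝ U w e) v e'
  rw [key e', key e]
  simpa using hsymm

lemma pd12_comm {f : ℝ → ℝ → ℝ → ℝ} (hf : Sm f) (t x y : ℝ) :
    pd1 (pd2 f) t x y = pd2 (pd1 f) t x y := by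
  rw [pd1_eq hf.p2, pd2_eq hf.p1, unc_pd2 hf, unc_pd1 hf]
  exact hf.dv_comm _ _ _
lemma pd1t_comm {f : ℝ → ℝ → ℝ → ℝ} (hf : Sm f) (t x y : ℝ) :
    pd1 (pdt f) t x y = pdt (pd1 f) t x y := by
  rw [pd1_eq hf.pt, pdt_eq hf.p1, unc_pdt hf, unc_pd1 hf]
  exact hf.dv_comm _ _ _
lemma pd2t_comm {f : ℝ → ℝ → ℝ → ℝ} (hf : Sm f) (t x y : ℝ) :
    pd2 (pdt f) t x y = pdt (pd2 f) t x y := by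
  rw [pd2_eq hf.pt, pdt_eq hf.p2, unc_pdt hf, unc_pd2 hf]
  exact hf.dv_comm _ _ _

end AEE

namespace AEE

lemma Sm.add {f g : ℝ → ℝ → ℝ → ℝ} (hf : Sm f) (hg : Sm g) :
    Sm (fun t x y => f t x y + g t x y) := ContDiff.add hf hg
lemma Sm.sub {f g : ℝ → ℝ → ℝ → ℝ} (hf : Sm f) (hg : Sm g) :
    Sm (fun t x y => f t x y - g t x y) := ContDiff.sub hf hg
lemma Sm.mul {f g : ℝ → ℝ → ℝ → ℝ} (hf : Sm f) (hg : Sm g) :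
    Sm (fun t x y => f t x y * g t x y) := ContDiff.mul hf hg
lemma Sm.constMul {f : ℝ → ℝ → ℝ → ℝ} (c : ℝ) (hf : Sm f) :
    Sm (fun t x y => c * f t x y) := ContDiff.mul contDiff_const hf
lemma Sm.neg {f : ℝ → ℝ → ℝ → ℝ} (hf : Sm f) :
    Sm (fun t x y => -f t x y) := ContDiff.neg hf
lemma Sm.pow {f : ℝ → ℝ → ℝ → ℝ} (hf : Sm f) (n : ℕ) :
    Sm (fun t x y => f t x y ^ n) := ContDiff.pow hf n
lemma Sm.opA {f : ℝ → ℝ → ℝ → ℝ} (a : ℝ) (hf : Sm f) : Sm (_root_.opA a f) :=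
  hf.sub ((hf.p1.p1.add hf.p2.p2).constMul (a ^ 2))

-- congruence
lemma pd1_congr {f g : ℝ → ℝ → ℝ → ℝ} (h : ∀ t x y, f t x y = g t x y) (t x y : ℝ) :
    pd1 f t x y = pd1 g t x y := by
  unfold _root_.pd1; congr 1; funext x'; exact h t x' y
lemma pd2_congr {f g : ℝ → ℝ → ℝ → ℝ} (h : ∀ t x y, f t x y = g t x y) (t x y : ℝ) :
    pd2 f t x y = pd2 g t x y := by
  unfold _root_.pd2; congr 1; funext y'; exact h t x y'
lemma pdt_congr {f g : ℝ → ℝ → ℝ → ℝ} (h : ∀ t x y, f t x y = g t x y) (t x y : ℝ) :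
    pdt f t x y = pdt g t x y := by
  unfold _root_.pdt; congr 1; funext t'; exact h t' x y

-- convenient HasDerivAt forms
lemma SmHderiv1 {f : ℝ → ℝ → ℝ → ℝ} (hf : Sm f) (t x y : ℝ) :
    HasDerivAt (fun x' => f t x' y) (pd1 f t x y) x := by
  rw [pd1_eq hf]; exact hf.hd1 t x y
lemma SmHderiv2 {f : ℝ → ℝ → ℝ → ℝ} (hf : Sm f) (t x y : ℝ) :
    HasDerivAt (fun y' => f t x y') (pd2 f t x y) y := by
  rw [pd2_eq hf]; exact hf.hd2 t x y
lemma SmHderivt {f : ℝ → ℝ → ℝ → ℝ} (hf : Sm f) (t x y : ℝ) :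
    HasDerivAt (fun t' => f t' x y) (pdt f t x y) t := by
  rw [pdt_eq hf]; exact hf.hdt t x y

-- derivative rules, pointwise
lemma pd1_add {f g : ℝ → ℝ → ℝ → ℝ} (hf : Sm f) (hg : Sm g) (t x y : ℝ) :
    pd1 (fun t x y => f t x y + g t x y) t x y = pd1 f t x y + pd1 g t x y :=
  ((SmHderiv1 hf t x y).add (SmHderiv1 hg t x y)).deriv
lemma pd2_add {f g : ℝ → ℝ → ℝ → ℝ} (hf : Sm f) (hg : Sm g) (t x y : ℝ) :
    pd2 (fun t x y => f t x y + g t x y) t x y = pd2 f t x y + pd2 g t x y :=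
  ((SmHderiv2 hf t x y).add (SmHderiv2 hg t x y)).deriv
lemma pdt_add {f g : ℝ → ℝ → ℝ → ℝ} (hf : Sm f) (hg : Sm g) (t x y : ℝ) :
    pdt (fun t x y => f t x y + g t x y) t x y = pdt f t x y + pdt g t x y :=
  ((SmHderivt hf t x y).add (SmHderivt hg t x y)).deriv
lemma pd1_sub {f g : ℝ → ℝ → ℝ → ℝ} (hf : Sm f) (hg : Sm g) (t x y : ℝ) :
    pd1 (fun t x y => f t x y - g t x y) t x y = pd1 f t x y - pd1 g t x y :=
  ((SmHderiv1 hf t x y).sub (SmHderiv1 hg t x y)).deriv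
lemma pd2_sub {f g : ℝ → ℝ → ℝ → ℝ} (hf : Sm f) (hg : Sm g) (t x y : ℝ) :
    pd2 (fun t x y => f t x y - g t x y) t x y = pd2 f t x y - pd2 g t x y :=
  ((SmHderiv2 hf t x y).sub (SmHderiv2 hg t x y)).deriv
lemma pdt_sub {f g : ℝ → ℝ → ℝ → ℝ} (hf : Sm f) (hg : Sm g) (t x y : ℝ) :
    pdt (fun t x y => f t x y - g t x y) t x y = pdt f t x y - pdt g t x y :=
  ((SmHderivt hf t x y).sub (SmHderivt hg t x y)).deriv
lemma pd1_constMul {f : ℝ → ℝ → ℝ → ℝ} (c : ℝ) (hf : Sm f) (t x y : ℝ) :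
    pd1 (fun t x y => c * f t x y) t x y = c * pd1 f t x y :=
  ((SmHderiv1 hf t x y).const_mul c).deriv
lemma pd2_constMul {f : ℝ → ℝ → ℝ → ℝ} (c : ℝ) (hf : Sm f) (t x y : ℝ) :
    pd2 (fun t x y => c * f t x y) t x y = c * pd2 f t x y :=
  ((SmHderiv2 hf t x y).const_mul c).deriv
lemma pdt_constMul {f : ℝ → ℝ → ℝ → ℝ} (c : ℝ) (hf : Sm f) (t x y : ℝ) :
    pdt (fun t x y => c * f t x y) t x y = c * pdt f t x y :=
  ((SmHderivt hf t x y).const_mul c).deriv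
lemma pd1_mul {f g : ℝ → ℝ → ℝ → ℝ} (hf : Sm f) (hg : Sm g) (t x y : ℝ) :
    pd1 (fun t x y => f t x y * g t x y) t x y
      = pd1 f t x y * g t x y + f t x y * pd1 g t x y :=
  ((SmHderiv1 hf t x y).mul (SmHderiv1 hg t x y)).deriv
lemma pd2_mul {f g : ℝ → ℝ → ℝ → ℝ} (hf : Sm f) (hg : Sm g) (t x y : ℝ) :
    pd2 (fun t x y => f t x y * g t x y) t x y
      = pd2 f t x y * g t x y + f t x y * pd2 g t x y :=
  ((SmHderiv2 hf t x y).mul (SmHderiv2 hg t x y)).deriv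

-- opA commutes with partial derivatives
lemma pd1_opA {f : ℝ → ℝ → ℝ → ℝ} (a : ℝ) (hf : Sm f) (t x y : ℝ) :
    pd1 (opA a f) t x y = opA a (pd1 f) t x y := by
  show pd1 (fun t x y => f t x y - a ^ 2 * (pd1 (pd1 f) t x y + pd2 (pd2 f) t x y)) t x y = _
  rw [pd1_sub hf ((hf.p1.p1.add hf.p2.p2).constMul (a ^ 2)),
      pd1_constMul (a ^ 2) (hf.p1.p1.add hf.p2.p2),
      pd1_add hf.p1.p1 hf.p2.p2]
  unfold opA
  have c1 : pd1 (pd2 (pd2 f)) t x y = pd2 (pd2 (pd1 f)) t x y := by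
    rw [pd12_comm hf.p2, pd2_congr (fun t x y => pd12_comm hf t x y)]
  rw [c1]

lemma pd2_opA {f : ℝ → ℝ → ℝ → ℝ} (a : ℝ) (hf : Sm f) (t x y : ℝ) :
    pd2 (opA a f) t x y = opA a (pd2 f) t x y := by
  show pd2 (fun t x y => f t x y - a ^ 2 * (pd1 (pd1 f) t x y + pd2 (pd2 f) t x y)) t x y = _
  rw [pd2_sub hf ((hf.p1.p1.add hf.p2.p2).constMul (a ^ 2)),
      pd2_constMul (a ^ 2) (hf.p1.p1.add hf.p2.p2),
      pd2_add hf.p1.p1 hf.p2.p2]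
  unfold opA
  have c1 : pd2 (pd1 (pd1 f)) t x y = pd1 (pd1 (pd2 f)) t x y := by
    rw [← pd12_comm hf.p1, pd1_congr (fun t x y => (pd12_comm hf t x y).symm)]
  rw [c1]

lemma pdt_opA {f : ℝ → ℝ → ℝ → ℝ} (a : ℝ) (hf : Sm f) (t x y : ℝ) :
    pdt (opA a f) t x y = opA a (pdt f) t x y := by
  show pdt (fun t x y => f t x y - a ^ 2 * (pd1 (pd1 f) t x y + pd2 (pd2 f) t x y)) t x y = _
  rw [pdt_sub hf ((hf.p1.p1.add hf.p2.p2).constMul (a ^ 2)),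
      pdt_constMul (a ^ 2) (hf.p1.p1.add hf.p2.p2),
      pdt_add hf.p1.p1 hf.p2.p2]
  unfold opA
  have c1 : pdt (pd1 (pd1 f)) t x y = pd1 (pd1 (pdt f)) t x y := by
    rw [← pd1t_comm hf.p1, pd1_congr (fun t x y => (pd1t_comm hf t x y).symm)]
  have c2 : pdt (pd2 (pd2 f)) t x y = pd2 (pd2 (pdt f)) t x y := by
    rw [← pd2t_comm hf.p2, pd2_congr (fun t x y => (pd2t_comm hf t x y).symm)]
  rw [c1, c2]

-- periodicity
def Px (f : ℝ → ℝ → ℝ → ℝ) : Prop := ∀ t x y, f t (x + 2 * Real.pi) y = f t x y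
def Py (f : ℝ → ℝ → ℝ → ℝ) : Prop := ∀ t x y, f t x (y + 2 * Real.pi) = f t x y

lemma Px.pd1 {f : ℝ → ℝ → ℝ → ℝ} (h : Px f) : Px (_root_.pd1 f) := by
  intro t x y
  show deriv (fun x' => f t x' y) (x + 2*Real.pi) = deriv (fun x' => f t x' y) x
  rw [← deriv_comp_add_const (fun x' => f t x' y) (2*Real.pi) x]
  congr 1; funext x'; exact h t x' y
lemma Px.pd2 {f : ℝ → ℝ → ℝ → ℝ} (h : Px f) : Px (_root_.pd2 f) := by
  intro t x y
  show deriv (fun y' => f t (x + 2*Real.pi) y') y = deriv (fun y' => f t x y') y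
  congr 1; funext y'; exact h t x y'
lemma Px.pdt {f : ℝ → ℝ → ℝ → ℝ} (h : Px f) : Px (_root_.pdt f) := by
  intro t x y
  show deriv (fun t' => f t' (x + 2*Real.pi) y) t = deriv (fun t' => f t' x y) t
  congr 1; funext t'; exact h t' x y
lemma Py.pd2 {f : ℝ → ℝ → ℝ → ℝ} (h : Py f) : Py (_root_.pd2 f) := by
  intro t x y
  show deriv (fun y' => f t x y') (y + 2*Real.pi) = deriv (fun y' => f t x y') y
  rw [← deriv_comp_add_const (fun y' => f t x y') (2*Real.pi) y]
  congr 1; funext y'; exact h t x y'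
lemma Py.pd1 {f : ℝ → ℝ → ℝ → ℝ} (h : Py f) : Py (_root_.pd1 f) := by
  intro t x y
  show deriv (fun x' => f t x' (y + 2*Real.pi)) x = deriv (fun x' => f t x' y) x
  congr 1; funext x'; exact h t x' y
lemma Py.pdt {f : ℝ → ℝ → ℝ → ℝ} (h : Py f) : Py (_root_.pdt f) := by
  intro t x y
  show deriv (fun t' => f t' x (y + 2*Real.pi)) t = deriv (fun t' => f t' x y) t
  congr 1; funext t'; exact h t' x y
lemma Px.opA {f : ℝ → ℝ → ℝ → ℝ} (a : ℝ) (h : Px f) : Px (_root_.opA a f) := by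
  intro t x y
  unfold _root_.opA
  rw [h t x y, h.pd1.pd1 t x y, h.pd2.pd2 t x y]
lemma Py.opA {f : ℝ → ℝ → ℝ → ℝ} (a : ℝ) (h : Py f) : Py (_root_.opA a f) := by
  intro t x y
  unfold _root_.opA
  rw [h t x y, h.pd1.pd1 t x y, h.pd2.pd2 t x y]
lemma Px.mul {f g : ℝ → ℝ → ℝ → ℝ} (hf : Px f) (hg : Px g) :
    Px (fun t x y => f t x y * g t x y) := fun t x y => by simp only [hf t x y, hg t x y]
lemma Py.mul {f g : ℝ → ℝ → ℝ → ℝ} (hf : Py f) (hg : Py g) :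
    Py (fun t x y => f t x y * g t x y) := fun t x y => by simp only [hf t x y, hg t x y]
lemma Px.sub {f g : ℝ → ℝ → ℝ → ℝ} (hf : Px f) (hg : Px g) :
    Px (fun t x y => f t x y - g t x y) := fun t x y => by simp only [hf t x y, hg t x y]
lemma Py.sub {f g : ℝ → ℝ → ℝ → ℝ} (hf : Py f) (hg : Py g) :
    Py (fun t x y => f t x y - g t x y) := fun t x y => by simp only [hf t x y, hg t x y]
lemma Px.pow {f : ℝ → ℝ → ℝ → ℝ} (hf : Px f) (n : ℕ) :
    Px (fun t x y => f t x y ^ n) := fun t x y => by simp only [hf t x y]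
lemma Py.pow {f : ℝ → ℝ → ℝ → ℝ} (hf : Py f) (n : ℕ) :
    Py (fun t x y => f t x y ^ n) := fun t x y => by simp only [hf t x y]

end AEE

namespace AEE

lemma opA_sub {f g : ℝ → ℝ → ℝ → ℝ} (a : ℝ) (hf : Sm f) (hg : Sm g) (t x y : ℝ) :
    opA a (fun t x y => f t x y - g t x y) t x y = opA a f t x y - opA a g t x y := by
  unfold opA
  rw [pd1_congr (fun t x y => pd1_sub hf hg t x y) t x y,
      pd1_sub hf.p1 hg.p1,
      pd2_congr (fun t x y => pd2_sub hf hg t x y) t x y,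
      pd2_sub hf.p2 hg.p2]
  ring

section Vorticity
variable {a : ℝ} {u₁ u₂ p : ℝ → ℝ → ℝ → ℝ}

lemma vorticity (a : ℝ) (u₁ u₂ p : ℝ → ℝ → ℝ → ℝ)
    (hu₁ : Sm u₁) (hu₂ : Sm u₂) (hp : Sm p)
    (hdiv : ∀ t x y, pd1 u₁ t x y + pd2 u₂ t x y = 0)
    (hpde1 : ∀ t x y,
      pdt (opA a u₁) t x y + (u₁ t x y * pd1 (opA a u₁) t x y
          + u₂ t x y * pd2 (opA a u₁) t x y)
        + (pd1 u₁ t x y * opA a u₁ t x y + pd1 u₂ t x y * opA a u₂ t x y)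
        = -pd1 p t x y)
    (hpde2 : ∀ t x y,
      pdt (opA a u₂) t x y + (u₁ t x y * pd1 (opA a u₂) t x y
          + u₂ t x y * pd2 (opA a u₂) t x y)
        + (pd2 u₁ t x y * opA a u₁ t x y + pd2 u₂ t x y * opA a u₂ t x y)
        = -pd2 p t x y) :
    ∀ t x y,
      pdt (opA a (fun t' x' y' => pd1 u₂ t' x' y' - pd2 u₁ t' x' y')) t x y
      + u₁ t x y * pd1 (opA a (fun t' x' y' => pd1 u₂ t' x' y' - pd2 u₁ t' x' y')) t x y
      + u₂ t x y * pd2 (opA a (fun t' x' y' => pd1 u₂ t' x' y' - pd2 u₁ t' x' y')) t x y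
      = 0 := by
  intro t x y
  set V₁ := opA a u₁ with hV₁def
  set V₂ := opA a u₂ with hV₂def
  have hV₁ : Sm V₁ := hu₁.opA a
  have hV₂ : Sm V₂ := hu₂.opA a
  set w := opA a (fun t' x' y' => pd1 u₂ t' x' y' - pd2 u₁ t' x' y') with hwdef
  have hξ : Sm (fun t' x' y' => pd1 u₂ t' x' y' - pd2 u₁ t' x' y') := hu₂.p1.sub hu₁.p2
  have hw : Sm w := hξ.opA a
  -- w = pd1 V₂ - pd2 V₁ pointwise
  have hw_eq : ∀ t x y, w t x y = pd1 V₂ t x y - pd2 V₁ t x y := by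
    intro t x y
    rw [hwdef, opA_sub a hu₂.p1 hu₁.p2, ← pd1_opA a hu₂, ← pd2_opA a hu₁]
  -- expansions of derivatives of w
  have hwt : pdt w t x y = pd1 (pdt V₂) t x y - pd2 (pdt V₁) t x y := by
    rw [pdt_congr hw_eq t x y, pdt_sub hV₂.p1 hV₁.p2, pd1t_comm hV₂, pd2t_comm hV₁]
  have hw1 : pd1 w t x y = pd1 (pd1 V₂) t x y - pd1 (pd2 V₁) t x y := by
    rw [pd1_congr hw_eq t x y, pd1_sub hV₂.p1 hV₁.p2]
  have hw2 : pd2 w t x y = pd2 (pd1 V₂) t x y - pd2 (pd2 V₁) t x y := by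
    rw [pd2_congr hw_eq t x y, pd2_sub hV₂.p1 hV₁.p2]
  -- pd1 of equation 2
  have hL2 : HasDerivAt
      (fun x' => pdt V₂ t x' y + (u₁ t x' y * pd1 V₂ t x' y + u₂ t x' y * pd2 V₂ t x' y)
        + (pd2 u₁ t x' y * V₁ t x' y + pd2 u₂ t x' y * V₂ t x' y))
      ((pd1 (pdt V₂) t x y
        + ((pd1 u₁ t x y * pd1 V₂ t x y + u₁ t x y * pd1 (pd1 V₂) t x y)
          + (pd1 u₂ t x y * pd2 V₂ t x y + u₂ t x y * pd1 (pd2 V₂) t x y)))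
        + ((pd1 (pd2 u₁) t x y * V₁ t x y + pd2 u₁ t x y * pd1 V₁ t x y)
          + (pd1 (pd2 u₂) t x y * V₂ t x y + pd2 u₂ t x y * pd1 V₂ t x y))) x :=
    (((SmHderiv1 hV₂.pt t x y).add
      (((SmHderiv1 hu₁ t x y).mul (SmHderiv1 hV₂.p1 t x y)).add
        ((SmHderiv1 hu₂ t x y).mul (SmHderiv1 hV₂.p2 t x y)))).add
      (((SmHderiv1 hu₁.p2 t x y).mul (SmHderiv1 hV₁ t x y)).add
        ((SmHderiv1 hu₂.p2 t x y).mul (SmHderiv1 hV₂ t x y))))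
  have hR2 : HasDerivAt (fun x' => -pd2 p t x' y) (-(pd1 (pd2 p) t x y)) x :=
    (SmHderiv1 hp.p2 t x y).neg
  have hfun2 : (fun x' => pdt V₂ t x' y + (u₁ t x' y * pd1 V₂ t x' y + u₂ t x' y * pd2 V₂ t x' y)
        + (pd2 u₁ t x' y * V₁ t x' y + pd2 u₂ t x' y * V₂ t x' y))
      = fun x' => -pd2 p t x' y := funext fun x' => hpde2 t x' y
  have e2 : (pd1 (pdt V₂) t x y
        + ((pd1 u₁ t x y * pd1 V₂ t x y + u₁ t x y * pd1 (pd1 V₂) t x y)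
          + (pd1 u₂ t x y * pd2 V₂ t x y + u₂ t x y * pd1 (pd2 V₂) t x y)))
        + ((pd1 (pd2 u₁) t x y * V₁ t x y + pd2 u₁ t x y * pd1 V₁ t x y)
          + (pd1 (pd2 u₂) t x y * V₂ t x y + pd2 u₂ t x y * pd1 V₂ t x y))
      = -(pd1 (pd2 p) t x y) := by
    rw [← hR2.deriv, ← hfun2]; exact hL2.deriv.symm
  -- pd2 of equation 1
  have hL1 : HasDerivAt
      (fun y' => pdt V₁ t x y' + (u₁ t x y' * pd1 V₁ t x y' + u₂ t x y' * pd2 V₁ t x y')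
        + (pd1 u₁ t x y' * V₁ t x y' + pd1 u₂ t x y' * V₂ t x y'))
      ((pd2 (pdt V₁) t x y
        + ((pd2 u₁ t x y * pd1 V₁ t x y + u₁ t x y * pd2 (pd1 V₁) t x y)
          + (pd2 u₂ t x y * pd2 V₁ t x y + u₂ t x y * pd2 (pd2 V₁) t x y)))
        + ((pd2 (pd1 u₁) t x y * V₁ t x y + pd1 u₁ t x y * pd2 V₁ t x y)
          + (pd2 (pd1 u₂) t x y * V₂ t x y + pd1 u₂ t x y * pd2 V₂ t x y))) y :=
    (((SmHderiv2 hV₁.pt t x y).add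
      (((SmHderiv2 hu₁ t x y).mul (SmHderiv2 hV₁.p1 t x y)).add
        ((SmHderiv2 hu₂ t x y).mul (SmHderiv2 hV₁.p2 t x y)))).add
      (((SmHderiv2 hu₁.p1 t x y).mul (SmHderiv2 hV₁ t x y)).add
        ((SmHderiv2 hu₂.p1 t x y).mul (SmHderiv2 hV₂ t x y))))
  have hR1 : HasDerivAt (fun y' => -pd1 p t x y') (-(pd2 (pd1 p) t x y)) y :=
    (SmHderiv2 hp.p1 t x y).neg
  have hfun1 : (fun y' => pdt V₁ t x y' + (u₁ t x y' * pd1 V₁ t x y' + u₂ t x y' * pd2 V₁ t x y')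
        + (pd1 u₁ t x y' * V₁ t x y' + pd1 u₂ t x y' * V₂ t x y'))
      = fun y' => -pd1 p t x y' := funext fun y' => hpde1 t x y'
  have e1 : (pd2 (pdt V₁) t x y
        + ((pd2 u₁ t x y * pd1 V₁ t x y + u₁ t x y * pd2 (pd1 V₁) t x y)
          + (pd2 u₂ t x y * pd2 V₁ t x y + u₂ t x y * pd2 (pd2 V₁) t x y)))
        + ((pd2 (pd1 u₁) t x y * V₁ t x y + pd1 u₁ t x y * pd2 V₁ t x y)
          + (pd2 (pd1 u₂) t x y * V₂ t x y + pd1 u₂ t x y * pd2 V₂ t x y))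
      = -(pd2 (pd1 p) t x y) := by
    rw [← hR1.deriv, ← hfun1]; exact hL1.deriv.symm
  -- Schwarz identities
  have hsp : pd1 (pd2 p) t x y = pd2 (pd1 p) t x y := pd12_comm hp t x y
  have hm1 : pd2 (pd1 V₁) t x y = pd1 (pd2 V₁) t x y := (pd12_comm hV₁ t x y).symm
  have hm2 : pd1 (pd2 V₂) t x y = pd2 (pd1 V₂) t x y := pd12_comm hV₂ t x y
  have hmu1 : pd1 (pd2 u₁) t x y = pd2 (pd1 u₁) t x y := pd12_comm hu₁ t x y
  have hmu2 : pd1 (pd2 u₂) t x y = pd2 (pd1 u₂) t x y := pd12_comm hu₂ t x y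
  have hdv := hdiv t x y
  rw [hwt, hw1, hw2]
  linear_combination e2 - e1 - hsp - (pd1 V₂ t x y - pd2 V₁ t x y) * hdv
    - u₂ t x y * hm2 + u₁ t x y * hm1 - V₁ t x y * hmu1 - V₂ t x y * hmu2

end Vorticity
end AEE

namespace AEE

lemma Sm.cont1 {f : ℝ → ℝ → ℝ → ℝ} (hf : Sm f) (t y : ℝ) :
    Continuous fun x' => f t x' y := by
  have h : Continuous fun x' : ℝ => ((t, x', y) : ℝ × ℝ × ℝ) := by continuity
  exact (ContDiff.continuous (hf : Sm f)).comp h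
lemma Sm.cont2 {f : ℝ → ℝ → ℝ → ℝ} (hf : Sm f) (t x : ℝ) :
    Continuous fun y' => f t x y' := by
  have h : Continuous fun y' : ℝ => ((t, x, y') : ℝ × ℝ × ℝ) := by continuity
  exact (ContDiff.continuous (hf : Sm f)).comp h
lemma Sm.contK {f : ℝ → ℝ → ℝ → ℝ} (hf : Sm f) (s : ℝ) :
    Continuous fun z : ℝ × ℝ => f s z.1 z.2 := by
  have h : Continuous fun z : ℝ × ℝ => ((s, z.1, z.2) : ℝ × ℝ × ℝ) := by continuity
  exact (ContDiff.continuous (hf : Sm f)).comp h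
lemma Sm.contFull {f : ℝ → ℝ → ℝ → ℝ} (hf : Sm f) :
    Continuous fun q : ℝ × ℝ × ℝ => f q.1 q.2.1 q.2.2 :=
  ContDiff.continuous (hf : Sm f)

lemma pd1_sq {f : ℝ → ℝ → ℝ → ℝ} (hf : Sm f) (t x y : ℝ) :
    pd1 (fun t x y => f t x y ^ 2) t x y = 2 * f t x y * pd1 f t x y := by
  have h := ((SmHderiv1 hf t x y).pow 2).deriv
  show deriv (fun x' => f t x' y ^ 2) x = _
  simpa [Pi.pow_def] using h
lemma pd2_sq {f : ℝ → ℝ → ℝ → ℝ} (hf : Sm f) (t x y : ℝ) :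
    pd2 (fun t x y => f t x y ^ 2) t x y = 2 * f t x y * pd2 f t x y := by
  have h := ((SmHderiv2 hf t x y).pow 2).deriv
  show deriv (fun y' => f t x y' ^ 2) y = _
  simpa [Pi.pow_def] using h

end AEE

open AEE

/-- The two-dimensional Averaged Euler equations
`∂ₜ(Au) + (u·∇)(Au) + (∇u)ᵀ·(Au) = -∇p`, `∇·u = 0`, with `A = 1 - a²Δ`, on the periodic
box `[0,2π]²`, conserve the enstrophy `(Aξ, Aξ) = ∫ (Aξ)² dx`, where
`ξ = ∂₁u₂ - ∂₂u₁` is the vorticity. -/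
theorem averaged_euler_enstrophy_conserved (a : ℝ) (u₁ u₂ p : ℝ → ℝ → ℝ → ℝ)
    (hu₁ : ContDiff ℝ (⊤ : ℕ∞) fun v : ℝ × ℝ × ℝ => u₁ v.1 v.2.1 v.2.2)
    (hu₂ : ContDiff ℝ (⊤ : ℕ∞) fun v : ℝ × ℝ × ℝ => u₂ v.1 v.2.1 v.2.2)
    (hp : ContDiff ℝ (⊤ : ℕ∞) fun v : ℝ × ℝ × ℝ => p v.1 v.2.1 v.2.2)
    (hu₁x : ∀ t x y, u₁ t (x + 2 * π) y = u₁ t x y)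
    (hu₁y : ∀ t x y, u₁ t x (y + 2 * π) = u₁ t x y)
    (hu₂x : ∀ t x y, u₂ t (x + 2 * π) y = u₂ t x y)
    (hu₂y : ∀ t x y, u₂ t x (y + 2 * π) = u₂ t x y)
    (hpx : ∀ t x y, p t (x + 2 * π) y = p t x y)
    (hpy : ∀ t x y, p t x (y + 2 * π) = p t x y)
    (hdiv : ∀ t x y, pd1 u₁ t x y + pd2 u₂ t x y = 0)
    (hpde1 : ∀ t x y,
      pdt (opA a u₁) t x y + (u₁ t x y * pd1 (opA a u₁) t x y
          + u₂ t x y * pd2 (opA a u₁) t x y)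
        + (pd1 u₁ t x y * opA a u₁ t x y + pd1 u₂ t x y * opA a u₂ t x y)
        = -pd1 p t x y)
    (hpde2 : ∀ t x y,
      pdt (opA a u₂) t x y + (u₁ t x y * pd1 (opA a u₂) t x y
          + u₂ t x y * pd2 (opA a u₂) t x y)
        + (pd2 u₁ t x y * opA a u₁ t x y + pd2 u₂ t x y * opA a u₂ t x y)
        = -pd2 p t x y) :
    ∀ s t : ℝ,
      (∫ x in Set.Icc (0 : ℝ) (2 * π), ∫ y in Set.Icc (0 : ℝ) (2 * π),
        (opA a (fun t' x' y' => pd1 u₂ t' x' y' - pd2 u₁ t' x' y') s x y) ^ 2) =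
      (∫ x in Set.Icc (0 : ℝ) (2 * π), ∫ y in Set.Icc (0 : ℝ) (2 * π),
        (opA a (fun t' x' y' => pd1 u₂ t' x' y' - pd2 u₁ t' x' y') t x y) ^ 2) := by
  intro s t
  have hsm1 : Sm u₁ := hu₁.of_le (by simp)
  have hsm2 : Sm u₂ := hu₂.of_le (by simp)
  have hsmp : Sm p := hp.of_le (by simp)
  set w := opA a (fun t' x' y' => pd1 u₂ t' x' y' - pd2 u₁ t' x' y') with hwdef
  have hwsm : Sm w := (hsm2.p1.sub hsm1.p2).opA a
  have hvort := AEE.vorticity a u₁ u₂ p hsm1 hsm2 hsmp hdiv hpde1 hpde2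
  -- periodicity of w
  have hPxw : Px w := Px.opA a (Px.sub (Px.pd1 hu₂x) (Px.pd2 hu₁x))
  have hPyw : Py w := Py.opA a (Py.sub (Py.pd1 hu₂y) (Py.pd2 hu₁y))
  -- the flux functions
  set P1 : ℝ → ℝ → ℝ → ℝ := fun t x y => u₁ t x y * w t x y ^ 2 with hP1def
  set P2 : ℝ → ℝ → ℝ → ℝ := fun t x y => u₂ t x y * w t x y ^ 2 with hP2def
  have hP1sm : Sm P1 := hsm1.mul (hwsm.pow 2)
  have hP2sm : Sm P2 := hsm2.mul (hwsm.pow 2)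
  have hPx1 : Px P1 := Px.mul hu₁x (Px.pow hPxw 2)
  have hPy2 : Py P2 := Py.mul hu₂y (Py.pow hPyw 2)
  -- the pointwise divergence identity
  have hdivgt : ∀ s x y, 2 * w s x y * pdt w s x y
      = -(pd1 P1 s x y + pd2 P2 s x y) := by
    intro s x y
    rw [hP1def, hP2def, pd1_mul hsm1 (hwsm.pow 2), pd2_mul hsm2 (hwsm.pow 2),
      pd1_sq hwsm, pd2_sq hwsm]
    linear_combination 2 * w s x y * (hvort s x y) + (w s x y) ^ 2 * (hdiv s x y)
  -- the box
  set I : Set ℝ := Set.Icc (0 : ℝ) (2 * π) with hIdef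
  set K : Set (ℝ × ℝ) := I ×ˢ I with hKdef
  have hKc : IsCompact K := isCompact_Icc.prod isCompact_Icc
  have hKm : MeasurableSet K := measurableSet_Icc.prod measurableSet_Icc
  have hvol : (volume : Measure (ℝ × ℝ)) = (volume : Measure ℝ).prod volume :=
    Measure.volume_eq_prod ℝ ℝ
  -- iterated integral = double integral
  have hIterEq : ∀ s : ℝ,
      (∫ x in I, ∫ y in I, (w s x y) ^ 2) = ∫ z in K, (w s z.1 z.2) ^ 2 := by
    intro s
    have hint : IntegrableOn (fun z : ℝ × ℝ => (w s z.1 z.2) ^ 2) K volume :=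
      ContinuousOn.integrableOn_compact hKc ((hwsm.contK s).pow 2).continuousOn
    rw [hKdef]
    rw [hvol] at hint ⊢
    exact (setIntegral_prod _ hint).symm
  -- vanishing of the x-flux integral
  have hflux1 : ∀ s : ℝ, (∫ z in K, pd1 P1 s z.1 z.2) = 0 := by
    intro s
    have hint : IntegrableOn (fun z : ℝ × ℝ => pd1 P1 s z.1 z.2) K volume :=
      ContinuousOn.integrableOn_compact hKc (hP1sm.p1.contK s).continuousOn
    have inner1 : ∀ y : ℝ, (∫ x in I, pd1 P1 s x y) = 0 := by
      intro y
      have hii : IntervalIntegrable (fun x => pd1 P1 s x y) volume 0 (2 * π) :=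
        (hP1sm.p1.cont1 s y).intervalIntegrable 0 (2 * π)
      have hsub := intervalIntegral.integral_eq_sub_of_hasDerivAt
        (f := fun x' => P1 s x' y) (f' := fun x' => pd1 P1 s x' y)
        (fun x _ => SmHderiv1 hP1sm s x y) hii
      have hper : P1 s (2 * π) y = P1 s 0 y := by
        have h := hPx1 s 0 y; rwa [zero_add] at h
      rw [hIdef, integral_Icc_eq_integral_Ioc,
        ← intervalIntegral.integral_of_le Real.two_pi_pos.le, hsub]
      show P1 s (2 * π) y - P1 s 0 y = 0
      rw [hper, sub_self]
    have hrw : (∫ z in K, pd1 P1 s z.1 z.2)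
        = ∫ y in I, ∫ x in I, pd1 P1 s x y := by
      rw [hKdef, hvol, ← Measure.prod_restrict]
      exact integral_prod_symm _ (by
        rw [Measure.prod_restrict, ← hvol]
        exact hint)
    rw [hrw]
    simp only [inner1, integral_zero]
  -- vanishing of the y-flux integral
  have hflux2 : ∀ s : ℝ, (∫ z in K, pd2 P2 s z.1 z.2) = 0 := by
    intro s
    have hint : IntegrableOn (fun z : ℝ × ℝ => pd2 P2 s z.1 z.2) K volume :=
      ContinuousOn.integrableOn_compact hKc (hP2sm.p2.contK s).continuousOn
    have inner2 : ∀ x : ℝ, (∫ y in I, pd2 P2 s x y) = 0 := by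
      intro x
      have hii : IntervalIntegrable (fun y => pd2 P2 s x y) volume 0 (2 * π) :=
        (hP2sm.p2.cont2 s x).intervalIntegrable 0 (2 * π)
      have hsub := intervalIntegral.integral_eq_sub_of_hasDerivAt
        (f := fun y' => P2 s x y') (f' := fun y' => pd2 P2 s x y')
        (fun y _ => SmHderiv2 hP2sm s x y) hii
      have hper : P2 s x (2 * π) = P2 s x 0 := by
        have h := hPy2 s x 0; rwa [zero_add] at h
      rw [hIdef, integral_Icc_eq_integral_Ioc,
        ← intervalIntegral.integral_of_le Real.two_pi_pos.le, hsub]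
      show P2 s x (2 * π) - P2 s x 0 = 0
      rw [hper, sub_self]
    have hrw : (∫ z in K, pd2 P2 s z.1 z.2)
        = ∫ x in I, ∫ y in I, pd2 P2 s x y := by
      rw [hKdef, hvol]
      exact setIntegral_prod _ (by rw [← hvol]; exact hint)
    rw [hrw]
    simp only [inner2, integral_zero]
  -- the time derivative of the enstrophy vanishes
  have hzero : ∀ s : ℝ, (∫ z in K, 2 * w s z.1 z.2 * pdt w s z.1 z.2) = 0 := by
    intro s
    have heq : (fun z : ℝ × ℝ => 2 * w s z.1 z.2 * pdt w s z.1 z.2)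
        = fun z : ℝ × ℝ => -(pd1 P1 s z.1 z.2 + pd2 P2 s z.1 z.2) :=
      funext fun z => hdivgt s z.1 z.2
    rw [heq]
    have h1 : IntegrableOn (fun z : ℝ × ℝ => pd1 P1 s z.1 z.2) K volume :=
      ContinuousOn.integrableOn_compact hKc (hP1sm.p1.contK s).continuousOn
    have h2 : IntegrableOn (fun z : ℝ × ℝ => pd2 P2 s z.1 z.2) K volume :=
      ContinuousOn.integrableOn_compact hKc (hP2sm.p2.contK s).continuousOn
    rw [integral_neg, integral_add h1 h2, hflux1 s, hflux2 s]
    norm_num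
  -- differentiation under the integral sign
  have hD : ∀ s : ℝ, HasDerivAt (fun s' => ∫ z in K, (w s' z.1 z.2) ^ 2) 0 s := by
    intro s
    have hF'sm : Sm (fun t x y => 2 * w t x y * pdt w t x y) :=
      (hwsm.constMul 2).mul hwsm.pt
    obtain ⟨C, hC⟩ := (isCompact_Icc.prod hKc).exists_bound_of_continuousOn
      (f := fun q : ℝ × ℝ × ℝ => 2 * w q.1 q.2.1 q.2.2 * pdt w q.1 q.2.1 q.2.2)
      (s := Set.Icc (s - 1) (s + 1) ×ˢ K) hF'sm.contFull.continuousOn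
    have key := hasDerivAt_integral_of_dominated_loc_of_deriv_le
      (μ := volume.restrict K) (x₀ := s) (s := Metric.ball s 1)
      (F := fun s' (z : ℝ × ℝ) => (w s' z.1 z.2) ^ 2)
      (F' := fun s' (z : ℝ × ℝ) => 2 * w s' z.1 z.2 * pdt w s' z.1 z.2)
      (bound := fun _ => C) (Metric.ball_mem_nhds s one_pos)
      (Filter.Eventually.of_forall fun s' =>
        (((hwsm.contK s').pow 2).aestronglyMeasurable))
      (ContinuousOn.integrableOn_compact hKc ((hwsm.contK s).pow 2).continuousOn)
      ((hF'sm.contK s).aestronglyMeasurable)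
      (by
        filter_upwards [self_mem_ae_restrict hKm] with z hz
        intro s' hs'
        have hd : |s' - s| < 1 := by simpa [Real.dist_eq] using hs'
        have hd' := abs_lt.mp hd
        exact hC (s', z) ⟨⟨by linarith, by linarith⟩, hz⟩)
      (integrableOn_const hKc.measure_lt_top.ne)
      (by
        filter_upwards with z
        intro s' _
        have h := (SmHderivt hwsm s' z.1 z.2).pow 2
        simpa [Pi.pow_def] using h)
    have hg := key.2
    rw [hzero s] at hg
    exact hg
  -- conclude: the enstrophy is constant
  have hconst := is_const_of_deriv_eq_zero
    (f := fun s' => ∫ z in K, (w s' z.1 z.2) ^ 2)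
    (fun s' => (hD s').differentiableAt) (fun s' => (hD s').deriv) s t
  rw [hIterEq s, hIterEq t]
  exact hconst
end
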